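/- arXiv:math/9805083 — 5 statements merged into one kernel-verified Lean document; each statement's English description precedes it below -/
import Mathlib

section
/- (Sinclair's stability lemma.) Let X and Y be Banach spaces, let S : X → Y be a linear map (not assumed continuous), and let (T_n) be a sequence of continuous linear operators on X and (R_n) a sequence of continuous linear operators on Y satisfying S ∘ T_n = R_n ∘ S for every n. Then there exists N ∈ ℕ such that for all n ≥ N, the closure of (R_1 ∘ R_2 ∘ ⋯ ∘ R_n)(S(S)) equals the closure of (R_1 ∘ R_2 ∘ ⋯ ∘ R_{n+1})(S(S)). -/
open Filter Topology

/-- The separating space of a linear map `φ : A → B`: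
all `b ∈ B` such that there is a sequence `(aₙ)` in `A` with `aₙ → 0` and `φ(aₙ) → b`. -/
def separatingSpace {A B : Type*} [NormedAddCommGroup A] [NormedSpace ℂ A]
    [NormedAddCommGroup B] [NormedSpace ℂ B] (φ : A →ₗ[ℂ] B) : Set B :=
  {b : B | ∃ a : ℕ → A, Tendsto a atTop (nhds 0) ∧ Tendsto (fun n => φ (a n)) atTop (nhds b)}

/-- `compUpTo R n = R 0 ∘ R 1 ∘ ⋯ ∘ R n` (the sequence is indexed starting from `0`). -/
def compUpTo {Y : Type*} [NormedAddCommGroup Y] [NormedSpace ℂ Y]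
    (R : ℕ → (Y →L[ℂ] Y)) : ℕ → (Y →L[ℂ] Y)
  | 0 => R 0
  | n + 1 => (compUpTo R n).comp (R (n + 1))

namespace SinclairAux

section Basic

variable {A B : Type*} [NormedAddCommGroup A] [NormedSpace ℂ A]
  [NormedAddCommGroup B] [NormedSpace ℂ B]

/-- The separating space as a submodule. -/
def sepSub (φ : A →ₗ[ℂ] B) : Submodule ℂ B where
  carrier := separatingSpace φ
  add_mem' := by
    rintro x y ⟨a, ha0, hal⟩ ⟨b, hb0, hbl⟩
    exact ⟨fun n => a n + b n, by simpa using ha0.add hb0,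
      by simpa [map_add] using hal.add hbl⟩
  zero_mem' := ⟨fun _ => 0, tendsto_const_nhds, by simpa using tendsto_const_nhds⟩
  smul_mem' := by
    rintro c x ⟨a, ha0, hal⟩
    refine ⟨fun n => c • a n, by simpa using ha0.const_smul c, ?_⟩
    simpa [map_smul] using hal.const_smul c

lemma mem_sepSub_iff (φ : A →ₗ[ℂ] B) (b : B) :
    b ∈ sepSub φ ↔ b ∈ separatingSpace φ := Iff.rfl

/-- The diagonal-extraction lemma. -/
lemma diag (φ : A →ₗ[ℂ] B) {v : ℕ → A} {s : ℕ → B} {y : B}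
    (hv : Tendsto v atTop (𝓝 0)) (hs : ∀ n, s n ∈ separatingSpace φ)
    (hl : Tendsto (fun n => φ (v n) - s n) atTop (𝓝 y)) :
    y ∈ separatingSpace φ := by
  have key : ∀ n : ℕ, ∃ a : A, ‖a‖ ≤ 1 / (n + 1) ∧ ‖φ a - s n‖ ≤ 1 / (n + 1) := by
    intro n
    obtain ⟨a, ha0, hal⟩ := hs n
    have hp : (0 : ℝ) < 1 / (n + 1) := by positivity
    have e1 : ∀ᶠ m in atTop, ‖a m‖ < 1 / (n + 1) :=
      (NormedAddCommGroup.tendsto_nhds_zero.mp ha0) _ hp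
    have e0 : Tendsto (fun m => φ (a m) - s n) atTop (𝓝 0) := by
      simpa using hal.sub (tendsto_const_nhds (x := s n))
    have e2 : ∀ᶠ m in atTop, ‖φ (a m) - s n‖ < 1 / (n + 1) :=
      (NormedAddCommGroup.tendsto_nhds_zero.mp e0) _ hp
    obtain ⟨m, hm1, hm2⟩ := (e1.and e2).exists
    exact ⟨a m, hm1.le, hm2.le⟩
  choose a ha1 ha2 using key
  have ha0 : Tendsto a atTop (𝓝 0) :=
    squeeze_zero_norm ha1 tendsto_one_div_add_atTop_nhds_zero_nat
  refine ⟨fun n => v n - a n, by simpa using hv.sub ha0, ?_⟩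
  have h2 : Tendsto (fun n => s n - φ (a n)) atTop (𝓝 0) :=
    squeeze_zero_norm (fun n => by rw [norm_sub_rev]; exact ha2 n)
      tendsto_one_div_add_atTop_nhds_zero_nat
  have h3 : Tendsto (fun n => (φ (v n) - s n) + (s n - φ (a n))) atTop (𝓝 (y + 0)) :=
    hl.add h2
  have : (fun n => (φ (v n) - s n) + (s n - φ (a n))) = fun n => φ (v n - a n) := by
    funext n; rw [map_sub]; abel
  rw [this, add_zero] at h3
  exact h3

lemma isClosed_sep (φ : A →ₗ[ℂ] B) : IsClosed (separatingSpace φ) := by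
  refine isClosed_of_closure_subset fun y hy => ?_
  obtain ⟨s, hs, hsy⟩ := mem_closure_iff_seq_limit.mp hy
  have hneg : -y ∈ separatingSpace φ := by
    refine diag φ (v := fun _ => 0) tendsto_const_nhds hs ?_
    simpa using hsy.neg
  simpa [mem_sepSub_iff] using (sepSub φ).neg_mem hneg

lemma isClosed_sepSub (φ : A →ₗ[ℂ] B) : IsClosed ((sepSub φ : Submodule ℂ B) : Set B) :=
  isClosed_sep φ

end Basic

section Banach

variable {A B : Type*} [NormedAddCommGroup A] [NormedSpace ℂ A] [CompleteSpace A]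
  [NormedAddCommGroup B] [NormedSpace ℂ B] [CompleteSpace B]

/-- The composite of `φ` with the quotient by its separating space is continuous
(closed graph theorem). -/
lemma cont_mk_comp (φ : A →ₗ[ℂ] B) :
    Continuous ((sepSub φ).mkQ.comp φ) := by
  haveI : IsClosed ((sepSub φ : Submodule ℂ B) : Set B) := isClosed_sepSub φ
  apply LinearMap.continuous_of_seq_closed_graph
  intro u x w hu hw
  set g := (sepSub φ).mkQ.comp φ with hg
  have hv : Tendsto (fun n => u n - x) atTop (𝓝 0) := by
    simpa using hu.sub (tendsto_const_nhds (x := x))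
  have hw' : Tendsto (fun n => g (u n - x)) atTop (𝓝 (w - g x)) := by
    have := hw.sub (tendsto_const_nhds (x := g x))
    simpa [Function.comp, map_sub] using this
  obtain ⟨y, hy⟩ := (sepSub φ).mkQ_surjective (w - g x)
  have hq : Tendsto (fun n => (Submodule.Quotient.mk (φ (u n - x) - y) : B ⧸ sepSub φ))
      atTop (𝓝 0) := by
    have : ∀ n, (Submodule.Quotient.mk (φ (u n - x) - y) : B ⧸ sepSub φ)
        = g (u n - x) - (w - g x) := by
      intro n
      rw [← hy]
      simp [hg, Submodule.mkQ_apply, Submodule.Quotient.mk_sub]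
    simp only [this]
    simpa using hw'.sub (tendsto_const_nhds (x := w - g x))
  have hqn : Tendsto (fun n => ‖(Submodule.Quotient.mk (φ (u n - x) - y) : B ⧸ sepSub φ)‖)
      atTop (𝓝 0) := by simpa using hq.norm
  have hm : ∀ n : ℕ, ∃ m : B, (Submodule.Quotient.mk m : B ⧸ sepSub φ)
      = Submodule.Quotient.mk (φ (u n - x) - y)
      ∧ ‖m‖ < ‖(Submodule.Quotient.mk (φ (u n - x) - y) : B ⧸ sepSub φ)‖ + 1 / (n + 1) := by
    intro n
    exact Submodule.Quotient.norm_mk_lt _ (by positivity)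
  choose m hm1 hm2 using hm
  have hmz : Tendsto m atTop (𝓝 0) := by
    refine squeeze_zero_norm (fun n => (hm2 n).le) ?_
    simpa using hqn.add tendsto_one_div_add_atTop_nhds_zero_nat
  have hsmem : ∀ n, φ (u n - x) - y - m n ∈ separatingSpace φ := by
    intro n
    rw [← mem_sepSub_iff, ← Submodule.Quotient.mk_eq_zero]
    rw [show φ (u n - x) - y - m n = (φ (u n - x) - y) - m n by abel]
    rw [Submodule.Quotient.mk_sub, hm1 n, sub_self]
  have hymem : y ∈ separatingSpace φ := by
    refine diag φ hv hsmem ?_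
    have : ∀ n, φ (u n - x) - (φ (u n - x) - y - m n) = y + m n := by intro n; abel
    simp only [this]
    simpa using (tendsto_const_nhds (x := y)).add hmz
  have : w - g x = 0 := by
    rw [← hy, Submodule.mkQ_apply, Submodule.Quotient.mk_eq_zero]
    exact hymem
  exact sub_eq_zero.mp this

/-- A linear-growth bound for the quotient composite. -/
lemma mk_comp_bound (φ : A →ₗ[ℂ] B) :
    ∃ C : ℝ, 1 ≤ C ∧ ∀ x : A, ‖(sepSub φ).mkQ (φ x)‖ ≤ C * ‖x‖ := by
  haveI : IsClosed ((sepSub φ : Submodule ℂ B) : Set B) := isClosed_sepSub φ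
  let g : A →L[ℂ] (B ⧸ sepSub φ) := ⟨(sepSub φ).mkQ.comp φ, cont_mk_comp φ⟩
  refine ⟨max 1 ‖g‖, le_max_left _ _, fun x => ?_⟩
  calc ‖(sepSub φ).mkQ (φ x)‖ = ‖g x‖ := rfl
    _ ≤ ‖g‖ * ‖x‖ := g.le_opNorm x
    _ ≤ max 1 ‖g‖ * ‖x‖ := by
        gcongr; exact le_max_right _ _

/-- Key lemma: the separating space of `R ∘ φ` is the closure of `R` applied to the
separating space of `φ`. -/
lemma sep_comp (Rc : B →L[ℂ] B) (φ : A →ₗ[ℂ] B) :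
    separatingSpace ((Rc : B →ₗ[ℂ] B).comp φ) = closure (Rc '' separatingSpace φ) := by
  apply le_antisymm
  · rintro b ⟨a, ha0, hal⟩
    have hcont := cont_mk_comp φ
    have hq : Tendsto (fun n => (sepSub φ).mkQ (φ (a n))) atTop (𝓝 0) := by
      have h0 : Tendsto (fun n => ((sepSub φ).mkQ.comp φ) (a n)) atTop
          (𝓝 (((sepSub φ).mkQ.comp φ) 0)) := (hcont.tendsto 0).comp ha0
      simpa using h0
    have hqn : Tendsto (fun n => ‖(sepSub φ).mkQ (φ (a n))‖) atTop (𝓝 0) := by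
      simpa using hq.norm
    have hm : ∀ n : ℕ, ∃ m : B, (Submodule.Quotient.mk m : B ⧸ sepSub φ)
        = Submodule.Quotient.mk (φ (a n))
        ∧ ‖m‖ < ‖(Submodule.Quotient.mk (φ (a n)) : B ⧸ sepSub φ)‖ + 1 / (n + 1) := by
      intro n
      exact Submodule.Quotient.norm_mk_lt _ (by positivity)
    choose m hm1 hm2 using hm
    have hmz : Tendsto m atTop (𝓝 0) := by
      refine squeeze_zero_norm (fun n => (hm2 n).le) ?_
      have : Tendsto (fun n : ℕ => ‖(Submodule.Quotient.mk (φ (a n)) : B ⧸ sepSub φ)‖)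
          atTop (𝓝 0) := by simpa [Submodule.mkQ_apply] using hqn
      simpa using this.add tendsto_one_div_add_atTop_nhds_zero_nat
    have hsmem : ∀ n, φ (a n) - m n ∈ separatingSpace φ := by
      intro n
      rw [← mem_sepSub_iff, ← Submodule.Quotient.mk_eq_zero, Submodule.Quotient.mk_sub,
        hm1 n, sub_self]
    have hRs : Tendsto (fun n => Rc (φ (a n) - m n)) atTop (𝓝 b) := by
      have h1 : Tendsto (fun n => Rc (φ (a n))) atTop (𝓝 b) := hal
      have h2 : Tendsto (fun n => Rc (m n)) atTop (𝓝 0) := by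
        have := (Rc.continuous.tendsto 0).comp hmz
        simpa [Function.comp_def] using this
      have := h1.sub h2
      simpa [map_sub] using this
    refine mem_closure_of_tendsto hRs (Eventually.of_forall fun n => ?_)
    exact Set.mem_image_of_mem Rc (hsmem n)
  · refine closure_minimal ?_ (isClosed_sep _)
    rintro b ⟨s, hs, rfl⟩
    obtain ⟨a, ha0, hal⟩ := hs
    exact ⟨a, ha0, by simpa [Function.comp_def] using (Rc.continuous.tendsto s).comp hal⟩

/-- If the separating space of `θ` is not inside the closed submodule `W`, the composite
with the quotient map is unbounded on small balls. -/
lemma exists_big_sep {W : Submodule ℂ B} (hWc : IsClosed ((W : Submodule ℂ B) : Set B))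
    (θ : A →ₗ[ℂ] B) (hns : ¬ separatingSpace θ ⊆ W) (δ M : ℝ) (hδ : 0 < δ) :
    ∃ x : A, ‖x‖ ≤ δ ∧ M < ‖W.mkQ (θ x)‖ := by
  by_contra hcon
  push_neg at hcon
  apply hns
  intro b hb
  obtain ⟨C, hC⟩ := LinearMap.bound_of_ball_bound (half_pos hδ) M (W.mkQ.comp θ)
    (fun z hz => by
      have : ‖z‖ ≤ δ := by
        have := Metric.mem_ball.mp hz
        simp only [dist_zero_right] at this
        linarith
      simpa using hcon z this)
  obtain ⟨a, ha0, hal⟩ := hb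
  have h1 : Tendsto (fun n => ‖W.mkQ (θ (a n))‖) atTop (𝓝 0) := by
    have hb' : Tendsto (fun n => C * ‖a n‖) atTop (𝓝 0) := by
      simpa using (ha0.norm.const_mul C)
    refine squeeze_zero (fun n => norm_nonneg _) (fun n => ?_) hb'
    simpa using hC (a n)
  have h2 : Tendsto (fun n => W.mkQ (θ (a n))) atTop (𝓝 (W.mkQ b)) := by
    rw [tendsto_iff_norm_sub_tendsto_zero]
    have hbn : Tendsto (fun n => ‖θ (a n) - b‖) atTop (𝓝 0) :=
      tendsto_iff_norm_sub_tendsto_zero.mp hal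
    refine squeeze_zero (fun n => norm_nonneg _) (fun n => ?_) hbn
    have he : W.mkQ (θ (a n)) - W.mkQ b = W.mkQ (θ (a n) - b) := (map_sub _ _ _).symm
    rw [he]
    simpa using Submodule.Quotient.norm_mk_le W (θ (a n) - b)
  have h3 : ‖W.mkQ b‖ = 0 := tendsto_nhds_unique h2.norm h1
  have h5 : ‖QuotientAddGroup.mk' W.toAddSubgroup b‖ = 0 := h3
  have h4 : b ∈ closure ((W.toAddSubgroup : AddSubgroup B) : Set B) :=
    (QuotientAddGroup.norm_mk_eq_zero_iff_mem_closure (S := W.toAddSubgroup) (m := b)).mp h5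
  have h6 : b ∈ closure ((W : Submodule ℂ B) : Set B) := by simpa using h4
  rwa [hWc.closure_eq] at h6

end Banach

section Core

variable {X Y : Type*} [NormedAddCommGroup X] [NormedSpace ℂ X] [CompleteSpace X]
  [NormedAddCommGroup Y] [NormedSpace ℂ Y] [CompleteSpace Y]

/-- `P U a b = U a ∘ U (a+1) ∘ ⋯ ∘ U (b-1)` for `a ≤ b` (and junk otherwise). -/
def P (U : ℕ → (X →L[ℂ] X)) (a : ℕ) : ℕ → (X →L[ℂ] X)
  | 0 => 1
  | b + 1 => if a ≤ b then (P U a b).comp (U b) else 1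

lemma P_self (U : ℕ → (X →L[ℂ] X)) (a : ℕ) : P U a a = 1 := by
  cases a with
  | zero => rfl
  | succ m => simp [P, Nat.not_succ_le_self]

lemma P_comp (U : ℕ → (X →L[ℂ] X)) {a b : ℕ} (hab : a ≤ b) :
    ∀ c, b ≤ c → P U a c = (P U a b).comp (P U b c) := by
  intro c hc
  induction c, hc using Nat.le_induction with
  | base => rw [P_self]; ext x; rfl
  | succ c hc ih =>
      have hac : a ≤ c := le_trans hab hc
      simp only [P, if_pos hac, if_pos hc, ih]
      ext x; rfl

lemma psi_eq (ψ : ℕ → (X →ₗ[ℂ] Y)) (U : ℕ → (X →L[ℂ] X))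
    (hU : ∀ k x, ψ (k + 1) x = ψ k (U k x)) {a b : ℕ} (hab : a ≤ b) :
    ∀ x, ψ b x = ψ a (P U a b x) := by
  induction b, hab using Nat.le_induction with
  | base => intro x; rw [P_self]; rfl
  | succ b hb ih =>
      intro x
      rw [hU b x, ih (U b x)]
      congr 1
      simp [P, if_pos hb]

/-- The core gliding-hump argument: there cannot be an infinite strictly decreasing chain. -/
lemma core (ψ : ℕ → (X →ₗ[ℂ] Y)) (U : ℕ → (X →L[ℂ] X))
    (hU : ∀ k x, ψ (k + 1) x = ψ k (U k x))
    (hsub : ∀ k, separatingSpace (ψ (k + 1)) ⊆ separatingSpace (ψ k))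
    (hne : ∀ k, separatingSpace (ψ (k + 1)) ≠ separatingSpace (ψ k)) : False := by
  classical
  set W : ℕ → Submodule ℂ Y := fun k => sepSub (ψ k) with hW
  have hWc : ∀ k, IsClosed ((W k : Submodule ℂ Y) : Set Y) := fun k => isClosed_sepSub _
  obtain ⟨C, hC1, hC⟩ : ∃ C : ℕ → ℝ, (∀ n, 1 ≤ C n) ∧
      ∀ n x, ‖(W (n + 1)).mkQ (ψ (n + 1) x)‖ ≤ C n * ‖x‖ := by
    choose C h1 h2 using fun n => mk_comp_bound (ψ (n + 1))
    exact ⟨C, h1, fun n x => h2 n x⟩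
  set E : ℕ → ℝ := fun m => 1 + C 0 + C (m - 1) with hE
  have hE1 : ∀ m, 1 ≤ E m := fun m => by
    have := hC1 0; have := hC1 (m - 1); simp only [hE]; linarith
  have hECsucc : ∀ n, C n ≤ E (n + 1) := fun n => by
    have := hC1 0; simp only [hE, Nat.add_sub_cancel]; linarith
  have hψP : ∀ a b : ℕ, a ≤ b → ∀ x, ψ b x = ψ a (P U a b x) :=
    fun a b hab => psi_eq ψ U hU hab
  have hnotsub : ∀ n, ¬ separatingSpace (ψ n) ⊆ (W (n + 1) : Set Y) := by
    intro n hss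
    exact hne n (le_antisymm (hsub n) hss)
  -- existence of a good vector at each stage
  have hex : ∀ (k : ℕ) (b : ℝ), ∃ x : X,
      (∀ m ≤ k, E m * ‖P U m k x‖ ≤ (1 / 2 : ℝ) ^ k) ∧
      (k : ℝ) + 1 + b < ‖(W (k + 1)).mkQ (ψ k x)‖ := by
    intro k b
    set D : ℝ := ∑ m ∈ Finset.range (k + 1), E m * ‖P U m k‖ with hD
    have hD0 : 0 ≤ D := Finset.sum_nonneg fun m _ => by
      have := hE1 m; positivity
    have hδ : (0 : ℝ) < (1 / 2 : ℝ) ^ k / (D + 1) := by positivity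
    obtain ⟨x, hx1, hx2⟩ := exists_big_sep (hWc (k + 1)) (ψ k) (hnotsub k)
      _ ((k : ℝ) + 1 + b) hδ
    refine ⟨x, fun m hm => ?_, hx2⟩
    have h1 : E m * ‖P U m k x‖ ≤ E m * (‖P U m k‖ * ‖x‖) :=
      mul_le_mul_of_nonneg_left ((P U m k).le_opNorm x) (by linarith [hE1 m])
    have h2 : E m * ‖P U m k‖ ≤ D := by
      refine Finset.single_le_sum (f := fun m => E m * ‖P U m k‖) (fun i _ => ?_)
        (Finset.mem_range.mpr (Nat.lt_succ_of_le hm))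
      have := hE1 i; positivity
    have h3 : E m * (‖P U m k‖ * ‖x‖) ≤ D * ((1 / 2 : ℝ) ^ k / (D + 1)) := by
      have hx0 : 0 ≤ ‖x‖ := norm_nonneg x
      have hEm0 : 0 ≤ E m * ‖P U m k‖ := by have := hE1 m; positivity
      calc E m * (‖P U m k‖ * ‖x‖) = (E m * ‖P U m k‖) * ‖x‖ := by ring
        _ ≤ D * ((1 / 2 : ℝ) ^ k / (D + 1)) := by
            apply mul_le_mul h2 hx1 hx0 hD0
    have h4 : D * ((1 / 2 : ℝ) ^ k / (D + 1)) ≤ (1 / 2 : ℝ) ^ k := by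
      have hp : (0:ℝ) ≤ (1/2:ℝ)^k := by positivity
      have h5 : D / (D + 1) ≤ 1 := by
        rw [div_le_one (by linarith)]; linarith
      calc D * ((1/2:ℝ)^k / (D+1)) = (D / (D+1)) * (1/2:ℝ)^k := by ring
        _ ≤ 1 * (1/2:ℝ)^k := by gcongr
        _ = (1/2:ℝ)^k := one_mul _
    exact le_trans h1 (le_trans h3 h4)
  -- construct the sequence
  let F : ℕ → X × Y := fun k => Nat.rec
    (let x0 := Classical.choose (hex 0 0); (x0, ψ 0 x0))
    (fun k ih =>
      let xk := Classical.choose (hex (k + 1) ‖ih.2‖); (xk, ih.2 + ψ (k + 1) xk)) k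
  set x : ℕ → X := fun k => (F k).1 with hx
  have hF2 : ∀ k, (F k).2 = ∑ j ∈ Finset.range (k + 1), ψ j (x j) := by
    intro k
    induction k with
    | zero => simp [F, hx]
    | succ k ih =>
        have h1 : (F (k + 1)).2 = (F k).2 + ψ (k + 1) (x (k + 1)) := rfl
        rw [Finset.sum_range_succ, ← ih, h1]
  have hxspec : ∀ k, (∀ m ≤ k, E m * ‖P U m k (x k)‖ ≤ (1 / 2 : ℝ) ^ k) ∧
      (k : ℝ) + 1 + ‖∑ j ∈ Finset.range k, ψ j (x j)‖ < ‖(W (k + 1)).mkQ (ψ k (x k))‖ := by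
    intro k
    cases k with
    | zero =>
        have h := Classical.choose_spec (hex 0 0)
        have hx0 : x 0 = Classical.choose (hex 0 0) := rfl
        rw [hx0]
        simpa using h
    | succ k =>
        have h := Classical.choose_spec (hex (k + 1) ‖(F k).2‖)
        have hx1 : x (k + 1) = Classical.choose (hex (k + 1) ‖(F k).2‖) := rfl
        rw [hx1, show (∑ j ∈ Finset.range (k + 1), ψ j (x j)) = (F k).2 from (hF2 k).symm]
        exact h
  have hxs : ∀ k, ∀ m ≤ k, E m * ‖P U m k (x k)‖ ≤ (1 / 2 : ℝ) ^ k := fun k => (hxspec k).1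
  have hxb : ∀ k : ℕ, (k : ℝ) + 1 + ‖∑ j ∈ Finset.range k, ψ j (x j)‖
      < ‖(W (k + 1)).mkQ (ψ k (x k))‖ := fun k => (hxspec k).2
  -- basic norm bounds
  have hgbound : ∀ m k, m ≤ k → ‖P U m k (x k)‖ ≤ (1 / 2 : ℝ) ^ k := by
    intro m k hmk
    have h := hxs k m hmk
    have h1 := hE1 m
    calc ‖P U m k (x k)‖ = 1 * ‖P U m k (x k)‖ := (one_mul _).symm
      _ ≤ E m * ‖P U m k (x k)‖ := mul_le_mul_of_nonneg_right h1 (norm_nonneg _)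
      _ ≤ (1 / 2 : ℝ) ^ k := h
  -- the element x∞
  have hgsum : Summable (fun k => P U 0 k (x k)) := by
    refine Summable.of_norm_bounded summable_geometric_two ?_
    intro k; exact hgbound 0 k (Nat.zero_le k)
  have htailn : ∀ n : ℕ, Summable (fun j => ‖P U (n + 1) (j + (n + 1)) (x (j + (n + 1)))‖) := by
    intro n
    refine Summable.of_nonneg_of_le (fun j => norm_nonneg _)
      (fun j => hgbound (n + 1) (j + (n + 1)) (Nat.le_add_left _ _)) ?_
    exact summable_geometric_two.comp_injective (add_left_injective (n + 1))
  set xx : X := ∑' k, P U 0 k (x k) with hxx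
  -- the tails
  have htail : ∀ n : ℕ, Summable (fun j => P U (n + 1) (j + (n + 1)) (x (j + (n + 1)))) :=
    fun n => (htailn n).of_norm
  have hkey : ∀ n : ℕ, (n : ℝ) ≤ ‖ψ 0 xx‖ := by
    intro n
    set z : X := ∑' j, P U (n + 1) (j + (n + 1)) (x (j + (n + 1))) with hz
    -- tail estimate
    have hzn : C n * ‖z‖ ≤ 1 := by
      have h1 : ‖z‖ ≤ ∑' j, ‖P U (n + 1) (j + (n + 1)) (x (j + (n + 1)))‖ :=
        norm_tsum_le_tsum_norm (htailn n)
      have h2 : ∀ j : ℕ, C n * ‖P U (n + 1) (j + (n + 1)) (x (j + (n + 1)))‖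
          ≤ (1 / 2 : ℝ) ^ (j + (n + 1)) := by
        intro j
        have hh := hxs (j + (n + 1)) (n + 1) (Nat.le_add_left _ _)
        have hce := hECsucc n
        calc C n * ‖P U (n + 1) (j + (n + 1)) (x (j + (n + 1)))‖
            ≤ E (n + 1) * ‖P U (n + 1) (j + (n + 1)) (x (j + (n + 1)))‖ :=
              mul_le_mul_of_nonneg_right hce (norm_nonneg _)
          _ ≤ (1 / 2 : ℝ) ^ (j + (n + 1)) := hh
      have h3 : C n * ‖z‖ ≤ ∑' j : ℕ, (1 / 2 : ℝ) ^ (j + (n + 1)) := by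
        calc C n * ‖z‖ ≤ C n * ∑' j, ‖P U (n + 1) (j + (n + 1)) (x (j + (n + 1)))‖ :=
              mul_le_mul_of_nonneg_left h1 (le_trans zero_le_one (hC1 n))
          _ = ∑' j, C n * ‖P U (n + 1) (j + (n + 1)) (x (j + (n + 1)))‖ :=
              (tsum_mul_left).symm
          _ ≤ ∑' j : ℕ, (1 / 2 : ℝ) ^ (j + (n + 1)) := by
              refine Summable.tsum_le_tsum h2 ?_ ?_
              · exact ((htailn n).mul_left (C n))
              · exact (summable_geometric_two.comp_injective (add_left_injective (n + 1)))
      have h4 : ∑' j : ℕ, (1 / 2 : ℝ) ^ (j + (n + 1)) ≤ 1 := by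
        have : ∀ j : ℕ, (1 / 2 : ℝ) ^ (j + (n + 1)) = (1 / 2 : ℝ) ^ j * (1 / 2 : ℝ) ^ (n + 1) :=
          fun j => pow_add _ _ _
        rw [tsum_congr this, tsum_mul_right, tsum_geometric_two]
        have h5 : (1 / 2 : ℝ) ^ (n + 1) ≤ (1 / 2 : ℝ) ^ 1 :=
          pow_le_pow_of_le_one (by norm_num) (by norm_num) (Nat.le_add_left 1 n)
        norm_num at h5 ⊢
        linarith
      linarith
    -- splitting
    have hsplit : xx = (∑ k ∈ Finset.range (n + 1), P U 0 k (x k)) + P U 0 (n + 1) z := by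
      have h1 := Summable.sum_add_tsum_nat_add (f := fun k => P U 0 k (x k)) (n + 1) hgsum
      rw [hxx, ← h1]
      congr 1
      rw [hz, ContinuousLinearMap.map_tsum _ (htail n)]
      refine tsum_congr fun j => ?_
      have hPc := P_comp U (Nat.zero_le (n + 1)) (j + (n + 1)) (Nat.le_add_left _ _)
      show P U 0 (j + (n + 1)) (x (j + (n + 1)))
        = P U 0 (n + 1) (P U (n + 1) (j + (n + 1)) (x (j + (n + 1))))
      rw [hPc]; rfl
    have hpsi0 : ψ 0 xx = (∑ k ∈ Finset.range (n + 1), ψ k (x k)) + ψ (n + 1) z := by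
      rw [hsplit, map_add, map_sum]
      congr 1
      · refine Finset.sum_congr rfl fun k _ => ?_
        rw [hψP 0 k (Nat.zero_le k) (x k)]
      · rw [hψP 0 (n + 1) (Nat.zero_le _) z]
    -- quotient estimate
    set Q : Y →ₗ[ℂ] Y ⧸ W (n + 1) := (W (n + 1)).mkQ with hQ
    have hQnorm : ∀ v : Y, ‖Q v‖ ≤ ‖v‖ := fun v => by
      simpa [hQ, Submodule.mkQ_apply] using Submodule.Quotient.norm_mk_le (W (n + 1)) v
    have hsum_split : (∑ k ∈ Finset.range (n + 1), ψ k (x k))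
        = (∑ k ∈ Finset.range n, ψ k (x k)) + ψ n (x n) := Finset.sum_range_succ _ n
    have hQxx : ‖Q (ψ 0 xx)‖ ≤ ‖ψ 0 xx‖ := hQnorm _
    have hQz : ‖Q (ψ (n + 1) z)‖ ≤ 1 := le_trans (hC n z) hzn
    have hQbig : (n : ℝ) + 1 + ‖∑ j ∈ Finset.range n, ψ j (x j)‖ < ‖Q (ψ n (x n))‖ := hxb n
    have heq : Q (ψ 0 xx) = Q (ψ n (x n)) + Q (∑ k ∈ Finset.range n, ψ k (x k))
        + Q (ψ (n + 1) z) := by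
      rw [hpsi0, map_add, hsum_split, map_add]
      abel
    have hlow : ‖Q (ψ n (x n))‖ - ‖Q (∑ k ∈ Finset.range n, ψ k (x k))‖
        - ‖Q (ψ (n + 1) z)‖ ≤ ‖Q (ψ 0 xx)‖ := by
      have h9 := norm_le_add_norm_add (Q (ψ n (x n)))
        (Q (∑ k ∈ Finset.range n, ψ k (x k)) + Q (ψ (n + 1) z))
      have h7 := norm_add_le (Q (∑ k ∈ Finset.range n, ψ k (x k))) (Q (ψ (n + 1) z))
      rw [← add_assoc, ← heq] at h9
      linarith
    have hQsum : ‖Q (∑ k ∈ Finset.range n, ψ k (x k))‖ ≤ ‖∑ k ∈ Finset.range n, ψ k (x k)‖ :=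
      hQnorm _
    have : (n : ℝ) ≤ ‖Q (ψ 0 xx)‖ := by linarith
    linarith [hQxx]
  -- final contradiction
  obtain ⟨n, hn⟩ := exists_nat_gt ‖ψ 0 xx‖
  exact absurd (hkey n) (not_le.mpr hn)

end Core

end SinclairAux

open SinclairAux in
/-- Sinclair's stability lemma. -/
theorem sinclair_stability
    {X Y : Type*} [NormedAddCommGroup X] [NormedSpace ℂ X] [CompleteSpace X]
    [NormedAddCommGroup Y] [NormedSpace ℂ Y] [CompleteSpace Y]
    (S : X →ₗ[ℂ] Y) (T : ℕ → (X →L[ℂ] X)) (R : ℕ → (Y →L[ℂ] Y))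
    (h : ∀ (n : ℕ) (x : X), S (T n x) = R n (S x)) :
    ∃ N : ℕ, ∀ n ≥ N,
      closure ((compUpTo R n) '' separatingSpace S) =
        closure ((compUpTo R (n + 1)) '' separatingSpace S) := by
  classical
  -- the T-side compositions
  let cT : ℕ → (X →L[ℂ] X) := compUpTo T
  -- θ n is S ∘ (T 0 ∘ ⋯ ∘ T n)
  let θ : ℕ → (X →ₗ[ℂ] Y) := fun n => S.comp ((cT n : X →L[ℂ] X) : X →ₗ[ℂ] X)
  have hcomm : ∀ n x, S (cT n x) = compUpTo R n (S x) := by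
    intro n
    induction n with
    | zero => intro x; exact h 0 x
    | succ n ih =>
        intro x
        have : cT (n + 1) x = cT n (T (n + 1) x) := rfl
        rw [this, ih (T (n + 1) x), h (n + 1) x]
        rfl
  have hθsep : ∀ n, closure ((compUpTo R n) '' separatingSpace S) = separatingSpace (θ n) := by
    intro n
    have hmaps : ((compUpTo R n : Y →L[ℂ] Y) : Y →ₗ[ℂ] Y).comp S = θ n := by
      ext x
      exact (hcomm n x).symm
    rw [← sep_comp (compUpTo R n) S, hmaps]
  by_contra hcon
  push_neg at hcon
  have hcon' : ∀ N : ℕ, ∃ n, N ≤ n ∧ separatingSpace (θ n) ≠ separatingSpace (θ (n + 1)) := by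
    intro N
    obtain ⟨n, hn1, hn2⟩ := hcon N
    exact ⟨n, hn1, by rw [← hθsep n, ← hθsep (n + 1)]; exact hn2⟩
  -- extract a subsequence of strict decreases
  choose f hf1 hf2 using hcon'
  let nseq : ℕ → ℕ := fun k => Nat.rec (f 0) (fun _ ih => f (ih + 1)) k
  have hnseq : ∀ k, nseq k + 1 ≤ nseq (k + 1) := fun k => hf1 (nseq k + 1)
  have hstrictθ : ∀ k : ℕ, separatingSpace (θ (nseq k + 1)) ≠ separatingSpace (θ (nseq k)) := by
    intro k
    cases k with
    | zero => exact fun hh => hf2 0 hh.symm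
    | succ k => exact fun hh => hf2 (nseq k + 1) hh.symm
  -- factorization of cT
  have hfac : ∀ a b : ℕ, a ≤ b → ∃ V : X →L[ℂ] X, ∀ x, cT b x = cT a (V x) := by
    intro a b hab
    induction b, hab using Nat.le_induction with
    | base => exact ⟨1, fun x => rfl⟩
    | succ b hb ih =>
        obtain ⟨V, hV⟩ := ih
        refine ⟨V.comp (T (b + 1)), fun x => ?_⟩
        have : cT (b + 1) x = cT b (T (b + 1) x) := rfl
        rw [this, hV (T (b + 1) x)]
        rfl
  have hsep_mono : ∀ a b : ℕ, a ≤ b → separatingSpace (θ b) ⊆ separatingSpace (θ a) := by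
    intro a b hab y hy
    obtain ⟨V, hV⟩ := hfac a b hab
    obtain ⟨u, hu0, hul⟩ := hy
    refine ⟨fun n => V (u n), by simpa [Function.comp_def] using (V.continuous.tendsto 0).comp hu0, ?_⟩
    have : ∀ n, θ a (V (u n)) = θ b (u n) := by
      intro n
      simp only [θ, LinearMap.comp_apply, ContinuousLinearMap.coe_coe]
      rw [hV (u n)]
    simpa only [this] using hul
  -- build ψ and U
  let ψ : ℕ → (X →ₗ[ℂ] Y) := fun k => θ (nseq k)
  have hUex : ∀ k, ∃ V : X →L[ℂ] X, ∀ x, ψ (k + 1) x = ψ k (V x) := by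
    intro k
    obtain ⟨V, hV⟩ := hfac (nseq k) (nseq (k + 1)) (le_trans (Nat.le_succ _) (hnseq k))
    refine ⟨V, fun x => ?_⟩
    simp only [ψ, θ, LinearMap.comp_apply, ContinuousLinearMap.coe_coe]
    rw [hV x]
  choose U hUspec using hUex
  have hsub : ∀ k, separatingSpace (ψ (k + 1)) ⊆ separatingSpace (ψ k) := fun k =>
    hsep_mono (nseq k) (nseq (k + 1)) (le_trans (Nat.le_succ _) (hnseq k))
  have hnech : ∀ k, separatingSpace (ψ (k + 1)) ≠ separatingSpace (ψ k) := by
    intro k heq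
    have h1 : separatingSpace (θ (nseq (k + 1))) ⊆ separatingSpace (θ (nseq k + 1)) :=
      hsep_mono (nseq k + 1) (nseq (k + 1)) (hnseq k)
    have h2 : separatingSpace (θ (nseq k + 1)) ⊆ separatingSpace (θ (nseq k)) :=
      hsep_mono (nseq k) (nseq k + 1) (Nat.le_succ _)
    have h3 : separatingSpace (θ (nseq k)) ⊆ separatingSpace (θ (nseq (k + 1))) := heq.symm.subset
    have : separatingSpace (θ (nseq k)) = separatingSpace (θ (nseq k + 1)) :=
      le_antisymm (fun y hy => h1 (h3 hy)) h2
    exact hstrictθ k this.symm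
  exact core ψ U hUspec hsub hnech
end

section
/- Let φ : A → B be a bijective algebra homomorphism between Banach algebras, and let p, q be idempotents in B such that the subspace pBq = { p b q : b ∈ B } is finite-dimensional. Then p s q = 0 for every s ∈ S(φ). -/
open Filter Topology

/-- If `φ : A → B` is a bijective algebra homomorphism between Banach algebras and
`p`, `q` are idempotents of `B` such that the subspace `pBq = {p b q : b ∈ B}` is
finite-dimensional, then `p s q = 0` for every `s ∈ S(φ)`. -/
theorem separatingSpace_compress_eq_zero_of_finiteDimensional
    {A B : Type*} [NonUnitalNormedRing A] [NormedSpace ℂ A] [IsScalarTower ℂ A A]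
    [SMulCommClass ℂ A A] [CompleteSpace A]
    [NonUnitalNormedRing B] [NormedSpace ℂ B] [IsScalarTower ℂ B B]
    [SMulCommClass ℂ B B] [CompleteSpace B]
    (φ : A →ₗ[ℂ] B) (hmul : ∀ x y : A, φ (x * y) = φ x * φ y)
    (hbij : Function.Bijective φ)
    (p q : B) (hp : p * p = p) (hq : q * q = q)
    (hfin : FiniteDimensional ℂ (Submodule.span ℂ {x : B | ∃ b : B, x = p * b * q})) :
    ∀ s ∈ separatingSpace φ, p * s * q = 0 := by
  obtain ⟨P, hP⟩ := hbij.surjective p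
  obtain ⟨Q, hQ⟩ := hbij.surjective q
  set f : A →ₗ[ℂ] A := (LinearMap.mulRight ℂ Q).comp (LinearMap.mulLeft ℂ P) with hfdef
  have hfa : ∀ a : A, f a = P * a * Q := fun a => rfl
  have hφf : ∀ a : A, φ (f a) = p * φ a * q := by
    intro a
    rw [hfa, hmul, hmul, hP, hQ]
  set V := LinearMap.range f with hV
  have hmem : ∀ v : V, φ (v : A) ∈
      Submodule.span ℂ {x : B | ∃ b : B, x = p * b * q} := by
    rintro ⟨v, a, rfl⟩
    exact Submodule.subset_span ⟨φ a, hφf a⟩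
  haveI hVfin : FiniteDimensional ℂ V := by
    haveI := hfin
    refine FiniteDimensional.of_injective
      (LinearMap.codRestrict (Submodule.span ℂ {x : B | ∃ b : B, x = p * b * q})
        (φ.comp V.subtype) hmem) ?_
    intro x y h
    exact Subtype.ext (hbij.injective (congrArg Subtype.val h))
  have hcont : Continuous fun a : A => φ (f a) := by
    have h1 : Continuous fun a : A => (⟨f a, LinearMap.mem_range_self f a⟩ : V) := by
      apply Continuous.subtype_mk
      have : Continuous fun a : A => P * a * Q :=
        (continuous_const.mul continuous_id).mul continuous_const
      rw [show (⇑f) = fun a => P * a * Q from funext hfa]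
      exact this
    have h2 : Continuous (φ.comp V.subtype) :=
      (φ.comp V.subtype).continuous_of_finiteDimensional
    exact h2.comp h1
  rintro s ⟨a, ha0, has⟩
  have hA : Tendsto (fun n => p * φ (a n) * q) atTop (nhds (p * s * q)) :=
    (tendsto_const_nhds.mul has).mul tendsto_const_nhds
  have hB : Tendsto (fun n => p * φ (a n) * q) atTop (nhds 0) := by
    have h := (hcont.tendsto 0).comp ha0
    simp only [Function.comp_def, hφf, map_zero, mul_zero, zero_mul] at h
    exact h
  exact tendsto_nhds_unique hA hB
end

section
/- Let φ : A → B be a surjective algebra homomorphism between Banach algebras, and let (p_n)_{n=1}^∞ be a sequence of pairwise orthogonal idempotents in B (that is, p_n² = p_n for all n and p_n p_m = 0 for n ≠ m) with sup_n ‖p_n‖ < ∞. Then there exists n with p_n s = 0 for all s ∈ S(φ), and there exists m with s p_m = 0 for all s ∈ S(φ). -/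
open Filter Topology Metric

section Aux

variable {A B : Type*} [NormedAddCommGroup A] [NormedSpace ℂ A]
  [NormedAddCommGroup B] [NormedSpace ℂ B]

lemma sep_mem_iff (φ : A →ₗ[ℂ] B) {b : B} :
    b ∈ separatingSpace φ ↔ ∀ ε > 0, ∃ a : A, ‖a‖ < ε ∧ ‖φ a - b‖ < ε := by
  constructor
  · rintro ⟨a, ha, hb⟩ ε hε
    have h1 : ∀ᶠ n in atTop, ‖a n‖ < ε := by
      have := (ha.eventually (Metric.ball_mem_nhds (0:A) hε))
      simpa [dist_eq_norm] using this
    have h2 : ∀ᶠ n in atTop, ‖φ (a n) - b‖ < ε := by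
      have := (hb.eventually (Metric.ball_mem_nhds b hε))
      simpa [dist_eq_norm] using this
    obtain ⟨n, hn1, hn2⟩ := (h1.and h2).exists
    exact ⟨a n, hn1, hn2⟩
  · intro h
    choose a ha1 ha2 using fun n : ℕ => h (1/(n+1)) (by positivity)
    refine ⟨a, ?_, ?_⟩
    · apply squeeze_zero_norm (fun n => (ha1 n).le)
      exact tendsto_one_div_add_atTop_nhds_zero_nat
    · rw [tendsto_iff_norm_sub_tendsto_zero]
      exact squeeze_zero (fun n => norm_nonneg _) (fun n => (ha2 n).le)
        tendsto_one_div_add_atTop_nhds_zero_nat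

/-- The separating space as a submodule. -/
def sepSubmodule (φ : A →ₗ[ℂ] B) : Submodule ℂ B where
  carrier := separatingSpace φ
  add_mem' := by
    rintro x y ⟨a, ha, ha'⟩ ⟨c, hc, hc'⟩
    exact ⟨fun n => a n + c n, by simpa using ha.add hc,
      by simpa [map_add] using ha'.add hc'⟩
  zero_mem' := ⟨fun _ => 0, tendsto_const_nhds, by simpa using tendsto_const_nhds⟩
  smul_mem' := by
    rintro c x ⟨a, ha, ha'⟩
    exact ⟨fun n => c • a n, by simpa using ha.const_smul c,
      by simpa [map_smul] using ha'.const_smul c⟩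

lemma infDist_submodule_le_norm (Y : Submodule ℂ B) (b : B) :
    infDist b (Y : Set B) ≤ ‖b‖ := by
  simpa [dist_eq_norm] using infDist_le_dist_of_mem (x := b) Y.zero_mem

lemma infDist_submodule_add (Y : Submodule ℂ B) (u w : B) :
    infDist (u + w) (Y : Set B) ≤ infDist u (Y : Set B) + infDist w (Y : Set B) := by
  have hne : (Y : Set B).Nonempty := ⟨0, Y.zero_mem⟩
  refine le_of_forall_pos_le_add fun ε hε => ?_
  obtain ⟨y, hy, hy'⟩ := (infDist_lt_iff hne).1
    (show infDist u (Y : Set B) < infDist u (Y : Set B) + ε/2 by linarith)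
  obtain ⟨z, hz, hz'⟩ := (infDist_lt_iff hne).1
    (show infDist w (Y : Set B) < infDist w (Y : Set B) + ε/2 by linarith)
  have hmem : y + z ∈ (Y : Set B) := Y.add_mem hy hz
  have := infDist_le_dist_of_mem (x := u + w) hmem
  have htri : dist (u + w) (y + z) ≤ dist u y + dist w z := by
    simp only [dist_eq_norm]
    calc ‖u + w - (y + z)‖ = ‖(u - y) + (w - z)‖ := by congr 1; abel
    _ ≤ ‖u - y‖ + ‖w - z‖ := norm_add_le _ _
  linarith

lemma infDist_submodule_smul_le (Y : Submodule ℂ B) (c : ℂ) (b : B) :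
    ‖c‖ * infDist b (Y : Set B) ≤ infDist (c • b) (Y : Set B) := by
  rcases eq_or_ne c 0 with rfl | hc
  · simpa using infDist_nonneg
  have hne : (Y : Set B).Nonempty := ⟨0, Y.zero_mem⟩
  by_contra hlt
  push_neg at hlt
  obtain ⟨y, hy, hy'⟩ := (infDist_lt_iff hne).1 hlt
  have hy2 : c⁻¹ • y ∈ (Y : Set B) := Y.smul_mem _ hy
  have h1 : infDist b (Y : Set B) ≤ dist b (c⁻¹ • y) := infDist_le_dist_of_mem hy2
  have h2 : dist (c • b) y = ‖c‖ * dist b (c⁻¹ • y) := by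
    rw [← dist_smul₀ c b, smul_inv_smul₀ hc]
  have hcpos : 0 < ‖c‖ := norm_pos_iff.2 hc
  nlinarith [mul_le_mul_of_nonneg_left h1 hcpos.le]

end Aux

section Core

variable {A B : Type*} [NormedAddCommGroup A] [NormedSpace ℂ A] [CompleteSpace A]
  [NormedAddCommGroup B] [NormedSpace ℂ B] [CompleteSpace B]

/-- Composition segment `R m ∘ ... ∘ R (m+i-1)` (applied left to right). -/
noncomputable def clmSeg {E : Type*} [NormedAddCommGroup E] [NormedSpace ℂ E]
    (R : ℕ → E →L[ℂ] E) : ℕ → ℕ → (E →L[ℂ] E)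
  | _, 0 => ContinuousLinearMap.id ℂ E
  | m, (i+1) => (clmSeg R m i).comp (R (m+i))

lemma clmSeg_zero {E : Type*} [NormedAddCommGroup E] [NormedSpace ℂ E]
    (R : ℕ → E →L[ℂ] E) (m : ℕ) : clmSeg R m 0 = ContinuousLinearMap.id ℂ E := rfl

lemma clmSeg_succ {E : Type*} [NormedAddCommGroup E] [NormedSpace ℂ E]
    (R : ℕ → E →L[ℂ] E) (m i : ℕ) :
    clmSeg R m (i+1) = (clmSeg R m i).comp (R (m+i)) := rfl

lemma clmSeg_add {E : Type*} [NormedAddCommGroup E] [NormedSpace ℂ E]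
    (R : ℕ → E →L[ℂ] E) (a b c : ℕ) :
    clmSeg R a (b + c) = (clmSeg R a b).comp (clmSeg R (a+b) c) := by
  induction c with
  | zero => simp [clmSeg_zero]
  | succ c ih =>
      have h1 : b + (c+1) = (b+c)+1 := rfl
      rw [h1, clmSeg_succ, ih, clmSeg_succ, ContinuousLinearMap.comp_assoc, Nat.add_assoc]

/-- Open-mapping based bound: if `Ψ` maps the separating space into `Y`, then
`a ↦ Ψ (φ a)` is bounded modulo `Y`. -/
lemma sep_quot_bound (φ : A →ₗ[ℂ] B) (Ψ : B →L[ℂ] B) (Y : Submodule ℂ B)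
    (hY : ∀ s ∈ separatingSpace φ, Ψ s ∈ Y) :
    ∃ C > 0, ∀ a : A, infDist (Ψ (φ a)) (Y : Set B) ≤ C * ‖a‖ := by
  classical
  set G : Submodule ℂ (A × B) := (LinearMap.graph φ).topologicalClosure with hG
  have hGclosed : IsClosed (G : Set (A × B)) := Submodule.isClosed_topologicalClosure _
  haveI : CompleteSpace G := hGclosed.completeSpace_coe
  let prA : G →L[ℂ] A := (ContinuousLinearMap.fst ℂ A B).comp G.subtypeL
  have hsurj : Function.Surjective prA := by
    intro a
    refine ⟨⟨(a, φ a), Submodule.le_topologicalClosure _ ?_⟩, rfl⟩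
    exact (LinearMap.mem_graph_iff φ (a, φ a)).2 rfl
  obtain ⟨C0, hC0, hpre⟩ := ContinuousLinearMap.exists_preimage_norm_le prA hsurj
  -- every element of G has second coordinate congruent to φ of first mod separating space
  have hGsep : ∀ g : A × B, g ∈ G → g.2 - φ g.1 ∈ separatingSpace φ := by
    intro g hg
    rw [sep_mem_iff]
    intro ε hε
    have hg' : g ∈ closure ((LinearMap.graph φ : Submodule ℂ (A × B)) : Set (A × B)) := by
      rwa [← Submodule.topologicalClosure_coe]
    obtain ⟨y, hy, hyd⟩ := Metric.mem_closure_iff.1 hg' ε hε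
    have hy2 : y.2 = φ y.1 := (LinearMap.mem_graph_iff φ y).1 hy
    refine ⟨y.1 - g.1, ?_, ?_⟩
    · have : dist g.1 y.1 ≤ dist g y := le_max_left _ _
      rw [dist_eq_norm] at this
      calc ‖y.1 - g.1‖ = ‖g.1 - y.1‖ := norm_sub_rev _ _
      _ ≤ dist g y := this
      _ < ε := hyd
    · have : dist g.2 y.2 ≤ dist g y := le_max_right _ _
      rw [dist_eq_norm] at this
      calc ‖φ (y.1 - g.1) - (g.2 - φ g.1)‖ = ‖φ y.1 - g.2‖ := by
            rw [map_sub]; congr 1; abel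
      _ = ‖g.2 - y.2‖ := by rw [hy2, norm_sub_rev]
      _ ≤ dist g y := this
      _ < ε := hyd
  refine ⟨C0 * ‖Ψ‖ + 1, by positivity, fun a => ?_⟩
  obtain ⟨g, hga, hgn⟩ := hpre a
  have hd : (g : A × B).2 - φ (g : A × B).1 ∈ separatingSpace φ := hGsep _ g.2
  have hga1 : (g : A × B).1 = a := hga
  have hmem : Ψ ((g : A × B).2 - φ a) ∈ Y := by
    rw [← hga1]; exact hY _ hd
  have hmem' : -(Ψ ((g : A × B).2 - φ a)) ∈ Y := Y.neg_mem hmem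
  have h1 : infDist (Ψ (φ a)) (Y : Set B) ≤ dist (Ψ (φ a)) (-(Ψ ((g:A×B).2 - φ a))) :=
    infDist_le_dist_of_mem hmem'
  have h2 : dist (Ψ (φ a)) (-(Ψ ((g:A×B).2 - φ a))) = ‖Ψ ((g:A×B).2)‖ := by
    rw [dist_eq_norm, sub_neg_eq_add, ← map_add]
    congr 2
    abel
  have h3 : ‖Ψ ((g:A×B).2)‖ ≤ ‖Ψ‖ * (C0 * ‖a‖) := by
    calc ‖Ψ ((g:A×B).2)‖ ≤ ‖Ψ‖ * ‖(g:A×B).2‖ := Ψ.le_opNorm _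
    _ ≤ ‖Ψ‖ * ‖g‖ := by
        have := norm_snd_le (g : A × B)
        exact mul_le_mul_of_nonneg_left this (norm_nonneg Ψ)
    _ ≤ ‖Ψ‖ * (C0 * ‖a‖) := mul_le_mul_of_nonneg_left hgn (norm_nonneg Ψ)
  calc infDist (Ψ (φ a)) (Y : Set B) ≤ ‖Ψ‖ * (C0 * ‖a‖) := by
        rw [h2] at h1; exact h1.trans h3
  _ ≤ (C0 * ‖Ψ‖ + 1) * ‖a‖ := by nlinarith [norm_nonneg a, norm_nonneg Ψ]

theorem core_contradiction (φ : A →ₗ[ℂ] B) (R : ℕ → A →L[ℂ] A) (T P : ℕ → B →L[ℂ] B)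
    (hint : ∀ n x, φ (R n x) = T n (φ x))
    (hP1 : ∀ n j, j < n → ∀ b : B, P n (T j b) = P n b)
    (hP2 : ∀ n b, P n (T n b) = 0)
    (hne : ∀ n, ∃ s ∈ separatingSpace φ, P n s ≠ 0) : False := by
  classical
  -- intertwining for composites
  have hTR : ∀ n x, φ (clmSeg R 0 n x) = clmSeg T 0 n (φ x) := by
    intro n
    induction n with
    | zero => intro x; simp [clmSeg_zero]
    | succ n ih =>
        intro x
        rw [clmSeg_succ, clmSeg_succ]
        simp only [ContinuousLinearMap.comp_apply]
        rw [ih, hint]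
  have hPT : ∀ n m, m ≤ n → ∀ b : B, P n (clmSeg T 0 m b) = P n b := by
    intro n m
    induction m with
    | zero => intro _ b; simp [clmSeg_zero]
    | succ m ih =>
        intro hm b
        rw [clmSeg_succ]
        simp only [ContinuousLinearMap.comp_apply]
        rw [ih (by omega), hP1 n (0+m) (by omega)]
  have hPT2 : ∀ n (b : B), P n (clmSeg T 0 (n+1) b) = 0 := by
    intro n b
    rw [clmSeg_succ]
    simp only [ContinuousLinearMap.comp_apply]
    rw [hPT n n le_rfl, Nat.zero_add, hP2]
  set SS : Submodule ℂ B := sepSubmodule φ with hSS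
  set Y : ℕ → Submodule ℂ B := fun n => SS.map (clmSeg T 0 n).toLinearMap with hY
  have hYmem : ∀ n s, s ∈ separatingSpace φ → clmSeg T 0 n s ∈ Y n := by
    intro n s hs
    exact ⟨s, hs, rfl⟩
  -- F1 : boundedness modulo Y n
  have hF1 : ∀ n : ℕ, ∃ C > 0, ∀ a : A,
      infDist (clmSeg T 0 n (φ a)) ((Y n : Set B)) ≤ C * ‖a‖ := by
    intro n
    exact sep_quot_bound φ (clmSeg T 0 n) (Y n) (fun s hs => hYmem n s hs)
  choose Cf hCfpos hCf using hF1
  -- F2 : unboundedness modulo Y (n+1)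
  have hF2 : ∀ (n : ℕ) (K ε : ℝ), 0 < ε → ∃ a : A, ‖a‖ ≤ ε ∧
      K ≤ infDist (clmSeg T 0 n (φ a)) ((Y (n+1) : Set B)) := by
    intro n K ε hε
    obtain ⟨s, hs, hPs⟩ := hne n
    have hYne : ((Y (n+1) : Set B)).Nonempty := ⟨0, (Y (n+1)).zero_mem⟩
    set δ := infDist (clmSeg T 0 n s) ((Y (n+1) : Set B)) with hδ
    have hδpos : 0 < δ := by
      rcases (infDist_nonneg : 0 ≤ δ).lt_or_eq with h | h
      · exact h
      · exfalso
        have h0 : clmSeg T 0 n s ∈ closure ((Y (n+1) : Set B)) :=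
          (mem_closure_iff_infDist_zero hYne).2 h.symm
        have himg : (P n) '' ((Y (n+1) : Set B)) ⊆ {0} := by
          rintro - ⟨y, ⟨s', _, rfl⟩, rfl⟩
          exact hPT2 n s'
        have h1 : P n (clmSeg T 0 n s) ∈ closure ((P n) '' ((Y (n+1) : Set B))) :=
          image_closure_subset_closure_image (P n).continuous ⟨_, h0, rfl⟩
        have h2 : P n (clmSeg T 0 n s) ∈ closure ({0} : Set B) :=
          closure_mono himg h1
        rw [closure_singleton, Set.mem_singleton_iff, hPT n n le_rfl] at h2
        exact hPs h2
    set t : ℝ := (|K| + 1)/δ with hT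
    have ht : 0 < t := by positivity
    have hs' : ((t:ℂ)) • s ∈ separatingSpace φ := SS.smul_mem _ hs
    have hsc : K + 1 ≤ infDist (clmSeg T 0 n ((t:ℂ) • s)) ((Y (n+1) : Set B)) := by
      rw [map_smul]
      have h1 := infDist_submodule_smul_le (Y (n+1)) ((t:ℂ)) (clmSeg T 0 n s)
      have h2 : ‖((t:ℂ))‖ = t := by
        rw [Complex.norm_real, Real.norm_eq_abs, abs_of_pos ht]
      rw [h2, ← hδ] at h1
      have h3 : t * δ = |K| + 1 := by
        rw [hT, div_mul_cancel₀ _ hδpos.ne']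
      have h4 : K + 1 ≤ |K| + 1 := by
        have := le_abs_self K; linarith
      linarith
    set N := ‖clmSeg T 0 n‖ with hN
    have hNpos : 0 < N + 1 := by positivity
    set ε' := min ε (1 / (N + 1)) with hε'
    have hε'pos : 0 < ε' := lt_min hε (by positivity)
    obtain ⟨a, ha1, ha2⟩ := (sep_mem_iff φ).1 hs' ε' hε'pos
    refine ⟨a, ha1.le.trans (min_le_left _ _), ?_⟩
    have lip : infDist (clmSeg T 0 n ((t:ℂ) • s)) ((Y (n+1) : Set B)) ≤
        infDist (clmSeg T 0 n (φ a)) ((Y (n+1) : Set B)) +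
          dist (clmSeg T 0 n ((t:ℂ) • s)) (clmSeg T 0 n (φ a)) :=
      infDist_le_infDist_add_dist
    have hdist : dist (clmSeg T 0 n ((t:ℂ) • s)) (clmSeg T 0 n (φ a)) ≤ 1 := by
      rw [dist_eq_norm, ← map_sub]
      calc ‖clmSeg T 0 n ((t:ℂ) • s - φ a)‖ ≤ N * ‖(t:ℂ) • s - φ a‖ :=
            (clmSeg T 0 n).le_opNorm _
      _ ≤ N * ε' := by
          apply mul_le_mul_of_nonneg_left _ (by rw [hN]; exact norm_nonneg _)
          rw [norm_sub_rev]
          exact ha2.le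
      _ ≤ N * (1 / (N + 1)) := by
          apply mul_le_mul_of_nonneg_left (min_le_right _ _)
          rw [hN]; exact norm_nonneg _
      _ ≤ 1 := by
          have h0 : 0 ≤ N := by rw [hN]; exact norm_nonneg _
          rw [mul_one_div]
          exact div_le_one_of_le₀ (by linarith) (by positivity)
    linarith
  -- choice of the gliding-hump elements
  have hex : ∀ (k : ℕ) (m : ℝ), ∃ a : A,
      (∀ m' ≤ k, ‖clmSeg R m' (k - m') a‖ ≤ (1/2:ℝ)^k) ∧
      (k + m + Cf (k+1) ≤ infDist (clmSeg T 0 k (φ a)) ((Y (k+1) : Set B))) := by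
    intro k m
    set D := ∑ m' ∈ Finset.range (k+1), ‖clmSeg R m' (k - m')‖ with hD
    have hD0 : 0 ≤ D := Finset.sum_nonneg fun _ _ => norm_nonneg _
    have hεpos : 0 < (1/2:ℝ)^k / (D + 1) := by positivity
    obtain ⟨a, ha1, ha2⟩ := hF2 k (k + m + Cf (k+1)) _ hεpos
    refine ⟨a, ?_, ha2⟩
    intro m' hm'
    have hterm : ‖clmSeg R m' (k - m')‖ ≤ D := by
      apply Finset.single_le_sum (f := fun i => ‖clmSeg R i (k - i)‖)
        (fun _ _ => norm_nonneg _)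
      exact Finset.mem_range.2 (by omega)
    calc ‖clmSeg R m' (k - m') a‖ ≤ ‖clmSeg R m' (k - m')‖ * ‖a‖ :=
          (clmSeg R m' (k - m')).le_opNorm _
    _ ≤ D * ((1/2:ℝ)^k / (D + 1)) := by
        apply mul_le_mul hterm ha1 (norm_nonneg _) hD0
    _ ≤ (1/2:ℝ)^k := by
        rw [div_eq_inv_mul, ← mul_assoc]
        have : D * (D+1)⁻¹ ≤ 1 := by
          rw [mul_inv_le_iff₀ (by positivity), one_mul]; linarith
        nlinarith [pow_nonneg (by norm_num : (0:ℝ) ≤ 1/2) k]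
  -- the recursive construction
  set f : ℕ → A × B := fun n => Nat.rec ((hex 0 ‖(0:B)‖).choose, (0:B))
    (fun k fk => ((hex (k+1) ‖fk.2 + clmSeg T 0 k (φ fk.1)‖).choose,
      fk.2 + clmSeg T 0 k (φ fk.1))) n with hf
  set x : ℕ → A := fun k => (f k).1 with hxdef
  set S2 : ℕ → B := fun k => (f k).2 with hS2def
  have hS2succ : ∀ k, S2 (k+1) = S2 k + clmSeg T 0 k (φ (x k)) := fun k => rfl
  have hxspec : ∀ k,
      (∀ m' ≤ k, ‖clmSeg R m' (k - m') (x k)‖ ≤ (1/2:ℝ)^k) ∧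
      (k + ‖S2 k‖ + Cf (k+1) ≤ infDist (clmSeg T 0 k (φ (x k))) ((Y (k+1) : Set B))) := by
    intro k
    cases k with
    | zero => exact (hex 0 ‖(0:B)‖).choose_spec
    | succ k => exact (hex (k+1) ‖S2 k + clmSeg T 0 k (φ (x k))‖).choose_spec
  -- summability
  have hxnorm : ∀ j, ‖clmSeg R 0 j (x j)‖ ≤ (1/2:ℝ)^j := by
    intro j
    have := (hxspec j).1 0 (Nat.zero_le _)
    simpa using this
  have hsum : Summable (fun j => clmSeg R 0 j (x j)) :=
    Summable.of_norm_bounded summable_geometric_two hxnorm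
  set a : A := ∑' j, clmSeg R 0 j (x j) with ha
  have hS2k : ∀ k, S2 k = ∑ j ∈ Finset.range k, clmSeg T 0 j (φ (x j)) := by
    intro k
    induction k with
    | zero => simp [hS2def, hf]
    | succ k ih => rw [hS2succ, ih, Finset.sum_range_succ]
  -- tails
  have key : ∀ k : ℕ, (k:ℝ) ≤ ‖φ a‖ := by
    intro k
    set w : ℕ → A := fun i => clmSeg R (k+1) i (x ((k+1)+i)) with hw
    have hwnorm : ∀ i, ‖w i‖ ≤ (1/2:ℝ)^(k+1) * (1/2:ℝ)^i := by
      intro i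
      have h1 := (hxspec ((k+1)+i)).1 (k+1) (by omega)
      have h2 : (k+1) + i - (k+1) = i := by omega
      rw [h2] at h1
      calc ‖w i‖ ≤ (1/2:ℝ)^((k+1)+i) := h1
      _ = (1/2:ℝ)^(k+1) * (1/2:ℝ)^i := pow_add _ _ _
    have hgs : Summable (fun i => (1/2:ℝ)^(k+1) * (1/2:ℝ)^i) :=
      summable_geometric_two.mul_left _
    have hwsum : Summable w := Summable.of_norm_bounded hgs hwnorm
    set v : A := ∑' i, w i with hv
    have hvnorm : ‖v‖ ≤ 1 := by
      have hwn : Summable (fun i => ‖w i‖) :=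
        Summable.of_nonneg_of_le (fun _ => norm_nonneg _) hwnorm hgs
      calc ‖v‖ ≤ ∑' i, ‖w i‖ := norm_tsum_le_tsum_norm hwn
      _ ≤ ∑' i, (1/2:ℝ)^(k+1) * (1/2:ℝ)^i := Summable.tsum_le_tsum hwnorm hwn hgs
      _ = (1/2:ℝ)^(k+1) * 2 := by rw [tsum_mul_left, tsum_geometric_two]
      _ ≤ 1 := by
          have h1 : (1/2:ℝ)^(k+1) ≤ (1/2:ℝ)^1 :=
            pow_le_pow_of_le_one (by norm_num) (by norm_num) (by omega)
          norm_num at h1 ⊢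
          linarith
    -- splitting the sum
    have hsplit : (∑ j ∈ Finset.range (k+1), clmSeg R 0 j (x j)) +
        clmSeg R 0 (k+1) v = a := by
      have h1 := Summable.sum_add_tsum_nat_add (f := fun j => clmSeg R 0 j (x j)) (k+1) hsum
      rw [ha, ← h1]
      congr 1
      symm
      have h2 : ∀ i : ℕ, clmSeg R 0 (i + (k+1)) (x (i + (k+1))) = clmSeg R 0 (k+1) (w i) := by
        intro i
        have h3 : i + (k+1) = (k+1) + i := by omega
        rw [h3]
        have h4 : clmSeg R 0 ((k+1) + i) = (clmSeg R 0 (k+1)).comp (clmSeg R (0+(k+1)) i) :=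
          clmSeg_add R 0 (k+1) i
        rw [h4]
        simp [hw]
      calc (∑' i, clmSeg R 0 (i + (k+1)) (x (i + (k+1))))
          = ∑' i, clmSeg R 0 (k+1) (w i) := by
            congr 1; funext i; exact h2 i
      _ = clmSeg R 0 (k+1) v := ((clmSeg R 0 (k+1)).map_tsum hwsum).symm
    -- φ of the splitting
    have hφa : φ a = (∑ j ∈ Finset.range (k+1), clmSeg T 0 j (φ (x j))) +
        clmSeg T 0 (k+1) (φ v) := by
      rw [← hsplit, map_add, map_sum]
      congr 1
      · exact Finset.sum_congr rfl fun j _ => hTR j (x j)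
      · exact hTR (k+1) v
    -- final estimate
    have hxk := (hxspec k).2
    have hrep : clmSeg T 0 k (φ (x k)) = φ a + -(S2 k) + -(clmSeg T 0 (k+1) (φ v)) := by
      rw [hφa, Finset.sum_range_succ, ← hS2k k]
      abel
    have hneg : -(clmSeg T 0 (k+1) (φ v)) = clmSeg T 0 (k+1) (φ (-v)) := by
      rw [map_neg, map_neg]
    have hle1 : infDist (clmSeg T 0 k (φ (x k))) ((Y (k+1) : Set B)) ≤
        infDist (φ a + -(S2 k)) ((Y (k+1) : Set B)) +
          infDist (-(clmSeg T 0 (k+1) (φ v))) ((Y (k+1) : Set B)) := by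
      rw [hrep]
      exact infDist_submodule_add _ _ _
    have hle2 : infDist (φ a + -(S2 k)) ((Y (k+1) : Set B)) ≤ ‖φ a‖ + ‖S2 k‖ := by
      calc infDist (φ a + -(S2 k)) ((Y (k+1) : Set B)) ≤
          infDist (φ a) ((Y (k+1) : Set B)) + infDist (-(S2 k)) ((Y (k+1) : Set B)) :=
            infDist_submodule_add _ _ _
      _ ≤ ‖φ a‖ + ‖-(S2 k)‖ :=
            add_le_add (infDist_submodule_le_norm _ _) (infDist_submodule_le_norm _ _)
      _ = ‖φ a‖ + ‖S2 k‖ := by rw [norm_neg]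
    have hle3 : infDist (-(clmSeg T 0 (k+1) (φ v))) ((Y (k+1) : Set B)) ≤ Cf (k+1) := by
      rw [hneg]
      calc infDist (clmSeg T 0 (k+1) (φ (-v))) ((Y (k+1) : Set B)) ≤ Cf (k+1) * ‖-v‖ :=
            hCf (k+1) (-v)
      _ = Cf (k+1) * ‖v‖ := by rw [norm_neg]
      _ ≤ Cf (k+1) * 1 := mul_le_mul_of_nonneg_left hvnorm (hCfpos (k+1)).le
      _ = Cf (k+1) := mul_one _
    linarith
  obtain ⟨n, hn⟩ := exists_nat_gt ‖φ a‖
  exact absurd (key n) (by push_neg; exact_mod_cast hn)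

end Core

/-- If `φ : A → B` is a surjective algebra homomorphism between Banach algebras and `(pₙ)`
is a norm-bounded sequence of pairwise orthogonal idempotents in `B`, then some `pₙ`
annihilates `S(φ)` on the left and some `pₘ` annihilates `S(φ)` on the right. -/
theorem exists_orthogonal_idempotent_annihilating_separatingSpace
    {A B : Type*} [NonUnitalNormedRing A] [NormedSpace ℂ A] [IsScalarTower ℂ A A]
    [SMulCommClass ℂ A A] [CompleteSpace A]
    [NonUnitalNormedRing B] [NormedSpace ℂ B] [IsScalarTower ℂ B B]
    [SMulCommClass ℂ B B] [CompleteSpace B]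
    (φ : A →ₗ[ℂ] B) (hmul : ∀ x y : A, φ (x * y) = φ x * φ y)
    (hsurj : Function.Surjective φ)
    (p : ℕ → B) (hidem : ∀ n, p n * p n = p n)
    (horth : ∀ m n, m ≠ n → p m * p n = 0)
    (hbdd : ∃ C : ℝ, ∀ n, ‖p n‖ ≤ C) :
    (∃ n, ∀ s ∈ separatingSpace φ, p n * s = 0) ∧
    (∃ m, ∀ s ∈ separatingSpace φ, s * p m = 0) := by

  classical
  have hq : ∀ n, φ ((hsurj (p n)).choose) = p n := fun n => (hsurj (p n)).choose_spec
  set q : ℕ → A := fun n => (hsurj (p n)).choose with hqdef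
  constructor
  · by_contra h
    push_neg at h
    refine core_contradiction φ
      (fun n => ContinuousLinearMap.id ℂ A - ContinuousLinearMap.mul ℂ A (q n))
      (fun n => ContinuousLinearMap.id ℂ B - ContinuousLinearMap.mul ℂ B (p n))
      (fun n => ContinuousLinearMap.mul ℂ B (p n)) ?_ ?_ ?_ ?_
    · intro n x
      simp only [ContinuousLinearMap.sub_apply, ContinuousLinearMap.id_apply,
        ContinuousLinearMap.mul_apply', map_sub, hmul, hq]
      rw [show φ (q n) = p n from hq n]
    · intro n j hj b
      simp only [ContinuousLinearMap.sub_apply, ContinuousLinearMap.id_apply,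
        ContinuousLinearMap.mul_apply', mul_sub]
      rw [← mul_assoc, horth n j (by omega), zero_mul, sub_zero]
    · intro n b
      simp only [ContinuousLinearMap.sub_apply, ContinuousLinearMap.id_apply,
        ContinuousLinearMap.mul_apply', mul_sub]
      rw [← mul_assoc, hidem, sub_self]
    · intro n
      obtain ⟨s, hs, hs'⟩ := h n
      exact ⟨s, hs, by simpa using hs'⟩
  · by_contra h
    push_neg at h
    refine core_contradiction φ
      (fun n => ContinuousLinearMap.id ℂ A - (ContinuousLinearMap.mul ℂ A).flip (q n))
      (fun n => ContinuousLinearMap.id ℂ B - (ContinuousLinearMap.mul ℂ B).flip (p n))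
      (fun n => (ContinuousLinearMap.mul ℂ B).flip (p n)) ?_ ?_ ?_ ?_
    · intro n x
      simp only [ContinuousLinearMap.sub_apply, ContinuousLinearMap.id_apply,
        ContinuousLinearMap.flip_apply, ContinuousLinearMap.mul_apply', map_sub, hmul, hq]
      rw [show φ (q n) = p n from hq n]
    · intro n j hj b
      simp only [ContinuousLinearMap.sub_apply, ContinuousLinearMap.id_apply,
        ContinuousLinearMap.flip_apply, ContinuousLinearMap.mul_apply', sub_mul]
      rw [mul_assoc, horth j n (by omega), mul_zero, sub_zero]
    · intro n b
      simp only [ContinuousLinearMap.sub_apply, ContinuousLinearMap.id_apply,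
        ContinuousLinearMap.flip_apply, ContinuousLinearMap.mul_apply', sub_mul]
      rw [mul_assoc, hidem, sub_self]
    · intro n
      obtain ⟨s, hs, hs'⟩ := h n
      exact ⟨s, hs, by simpa using hs'⟩
end

section
/- Let φ : A → B be a bijective algebra homomorphism between Banach algebras. Assume: (i) for every nonzero finite-dimensional closed two-sided ideal I of B there exist idempotents p, q ∈ B such that { p b q : b ∈ B } = { p x q : x ∈ I } ≠ {0}; and (ii) for every infinite-dimensional closed two-sided ideal I of B there exists a sequence (p_n)_{n=1}^∞ of pairwise orthogonal idempotents in B with sup_n ‖p_n‖ < ∞ such that either p_n x ≠ 0 for some x ∈ I for every n, or x p_n ≠ 0 for some x ∈ I for every n. Then φ is continuous. -/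
open Filter Topology

/-- A closed two-sided ideal of a (complex, not necessarily unital) Banach algebra `B`:
a ℂ-subspace of `B` that is norm-closed and absorbs multiplication on both sides. -/
def IsClosedIdeal {B : Type*} [NonUnitalNormedRing B] [NormedSpace ℂ B]
    (I : Submodule ℂ B) : Prop :=
  IsClosed (I : Set B) ∧ (∀ b : B, ∀ x ∈ I, b * x ∈ I) ∧ (∀ b : B, ∀ x ∈ I, x * b ∈ I)

section SepSpace
variable {A B : Type*} [NonUnitalNormedRing A] [NormedSpace ℂ A]
    [NonUnitalNormedRing B] [NormedSpace ℂ B]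

def sepSpace (φ : A →ₗ[ℂ] B) : Submodule ℂ B where
  carrier := {b | ∃ f : ℕ → A, Tendsto f atTop (𝓝 0) ∧ Tendsto (fun n => φ (f n)) atTop (𝓝 b)}
  zero_mem' := ⟨fun _ => 0, tendsto_const_nhds, by simpa using tendsto_const_nhds⟩
  add_mem' := by
    rintro a b ⟨f, hf0, hfa⟩ ⟨g, hg0, hgb⟩
    refine ⟨fun n => f n + g n, by simpa using hf0.add hg0, ?_⟩
    simpa [map_add] using hfa.add hgb
  smul_mem' := by
    rintro c b ⟨f, hf0, hfb⟩
    refine ⟨fun n => c • f n, by simpa using hf0.const_smul c, ?_⟩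
    simpa [map_smul] using hfb.const_smul c

theorem mem_sepSpace {φ : A →ₗ[ℂ] B} {b : B} :
    b ∈ sepSpace φ ↔ ∃ f : ℕ → A, Tendsto f atTop (𝓝 0) ∧
      Tendsto (fun n => φ (f n)) atTop (𝓝 b) := Iff.rfl

theorem sepSpace_isClosed (φ : A →ₗ[ℂ] B) : IsClosed ((sepSpace φ : Submodule ℂ B) : Set B) := by
  refine IsSeqClosed.isClosed ?_
  intro u b hu hub
  have key : ∀ m : ℕ, ∃ a : A, ‖a‖ < 1/(m+1) ∧ ‖φ a - u m‖ < 1/(m+1) := by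
    intro m
    obtain ⟨f, hf0, hfu⟩ := hu m
    have hpos : (0:ℝ) < 1/(m+1) := by positivity
    have e1 := (Metric.tendsto_nhds.mp hf0) _ hpos
    have e2 := (Metric.tendsto_nhds.mp hfu) _ hpos
    obtain ⟨n, h1, h2⟩ := (e1.and e2).exists
    exact ⟨f n, by simpa [dist_zero_right] using h1, by simpa [dist_eq_norm] using h2⟩
  choose g hg1 hg2 using key
  refine ⟨g, ?_, ?_⟩
  · exact squeeze_zero_norm (fun m => (hg1 m).le) tendsto_one_div_add_atTop_nhds_zero_nat
  · have h3 : Tendsto (fun m => φ (g m) - u m) atTop (𝓝 0) :=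
      squeeze_zero_norm (fun m => (hg2 m).le) tendsto_one_div_add_atTop_nhds_zero_nat
    simpa using h3.add hub

theorem sepSpace_isClosedIdeal (φ : A →ₗ[ℂ] B) (hmul : ∀ x y : A, φ (x * y) = φ x * φ y)
    (hsurj : Function.Surjective φ) : IsClosedIdeal (sepSpace φ) := by
  refine ⟨sepSpace_isClosed φ, ?_, ?_⟩
  · rintro b s hs
    obtain ⟨a, rfl⟩ := hsurj b
    obtain ⟨f, hf0, hfs⟩ := mem_sepSpace.mp hs
    refine mem_sepSpace.mpr ⟨fun n => a * f n, by simpa using tendsto_const_nhds.mul hf0, ?_⟩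
    simp only [hmul]
    simpa using tendsto_const_nhds.mul hfs
  · rintro b s hs
    obtain ⟨a, rfl⟩ := hsurj b
    obtain ⟨f, hf0, hfs⟩ := mem_sepSpace.mp hs
    refine mem_sepSpace.mpr ⟨fun n => f n * a, by simpa using hf0.mul tendsto_const_nhds, ?_⟩
    simp only [hmul]
    simpa using hfs.mul tendsto_const_nhds

end SepSpace

set_option maxHeartbeats 1000000 in
/-- Abstract form of the main theorem (automatic continuity): if `φ : A → B` is a bijective
algebra homomorphism between Banach algebras, and `B` satisfies
(i) every nonzero finite-dimensional closed two-sided ideal `I` of `B` admits idempotents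
`p, q` with `pBq = pIq ≠ {0}`, and
(ii) every infinite-dimensional closed two-sided ideal `I` of `B` admits a norm-bounded
sequence `(pₙ)` of pairwise orthogonal idempotents with `pₙ I ≠ 0` for all `n` or
`I pₙ ≠ 0` for all `n`,
then `φ` is continuous. -/
theorem automatic_continuity
    {A B : Type*} [NonUnitalNormedRing A] [NormedSpace ℂ A] [IsScalarTower ℂ A A]
    [SMulCommClass ℂ A A] [CompleteSpace A]
    [NonUnitalNormedRing B] [NormedSpace ℂ B] [IsScalarTower ℂ B B]
    [SMulCommClass ℂ B B] [CompleteSpace B]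
    (φ : A →ₗ[ℂ] B) (hmul : ∀ x y : A, φ (x * y) = φ x * φ y)
    (hbij : Function.Bijective φ)
    (h1 : ∀ I : Submodule ℂ B, IsClosedIdeal I → I ≠ ⊥ → FiniteDimensional ℂ I →
      ∃ p q : B, p * p = p ∧ q * q = q ∧
        {x : B | ∃ b : B, x = p * b * q} = {x : B | ∃ i ∈ I, x = p * i * q} ∧
        {x : B | ∃ b : B, x = p * b * q} ≠ {0})
    (h2 : ∀ I : Submodule ℂ B, IsClosedIdeal I → ¬ FiniteDimensional ℂ I →
      ∃ p : ℕ → B, (∀ n, p n * p n = p n) ∧ (∀ m n, m ≠ n → p m * p n = 0) ∧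
        (∃ C : ℝ, ∀ n, ‖p n‖ ≤ C) ∧
        ((∀ n, ∃ x ∈ I, p n * x ≠ 0) ∨ (∀ n, ∃ x ∈ I, x * p n ≠ 0))) :
    Continuous φ := by
  classical
  obtain ⟨hinj, hsurj⟩ := hbij
  set S : Submodule ℂ B := sepSpace φ with hSdef
  -- it suffices to show that the separating space is trivial
  have hSbot : S = ⊥ → Continuous φ := by
    intro hbot
    refine φ.continuous_of_seq_closed_graph ?_
    intro u x y hux huy
    have hmem : y - φ x ∈ S := by
      refine mem_sepSpace.mpr ⟨fun n => u n - x, ?_, ?_⟩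
      · simpa using hux.sub (tendsto_const_nhds (x := x))
      · simp only [map_sub]
        exact (huy.sub tendsto_const_nhds)
    rw [hbot, Submodule.mem_bot, sub_eq_zero] at hmem
    exact hmem
  refine hSbot ?_
  by_contra hne
  have hCI : IsClosedIdeal S := sepSpace_isClosedIdeal φ hmul hsurj
  by_cases hfd : FiniteDimensional ℂ S
  · -- finite-dimensional case
    exfalso
    obtain ⟨p, q, hp, hq, hset, hne0⟩ := h1 S hCI hne hfd
    set T : B →ₗ[ℂ] B := (LinearMap.mulRight ℂ q).comp (LinearMap.mulLeft ℂ p) with hT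
    have hTapp : ∀ b, T b = p * b * q := fun b => rfl
    set V : Submodule ℂ B := LinearMap.range T with hV
    have hVset : (V : Set B) = {x : B | ∃ b : B, x = p * b * q} := by
      ext x
      simp only [hV, SetLike.mem_coe, LinearMap.mem_range, Set.mem_setOf_eq]
      constructor
      · rintro ⟨b, rfl⟩; exact ⟨b, (hTapp b).symm⟩
      · rintro ⟨b, rfl⟩; exact ⟨b, (hTapp b)⟩
    have hVleS : V ≤ S := by
      intro x hx
      have hx2 : x ∈ {x : B | ∃ i ∈ S, x = p * i * q} := by
        rw [← hset, ← hVset]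
        exact hx
      obtain ⟨i, hi, rfl⟩ := hx2
      exact hCI.2.2 q _ (hCI.2.1 p _ hi)
    haveI : FiniteDimensional ℂ S := hfd
    haveI : FiniteDimensional ℂ V := Submodule.finiteDimensional_of_le hVleS
    obtain ⟨v, hvV, hv0⟩ : ∃ v, v ∈ {x : B | ∃ b : B, x = p * b * q} ∧ v ≠ 0 := by
      by_contra h
      push_neg at h
      refine hne0 (Set.eq_singleton_iff_unique_mem.mpr ⟨⟨0, by simp⟩, fun x hx => h x hx⟩)
    obtain ⟨s, hsS, hvs⟩ : ∃ i ∈ S, v = p * i * q := by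
      rw [hset] at hvV; exact hvV
    set U : Submodule ℂ A := V.comap φ with hU
    haveI : FiniteDimensional ℂ U := by
      refine FiniteDimensional.of_injective (φ.restrict (p := U) (q := V) (fun a ha => ha)) ?_
      intro x y hxy
      exact Subtype.ext (hinj (congrArg Subtype.val hxy))
    set φU : U →ₗ[ℂ] B := φ.comp U.subtype with hφU
    have hφUc : Continuous φU := φU.continuous_of_finiteDimensional
    set e : A := Function.surjInv hsurj p with he
    set f : A := Function.surjInv hsurj q with hf
    have hφe : φ e = p := Function.surjInv_eq hsurj p
    have hφf : φ f = q := Function.surjInv_eq hsurj q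
    obtain ⟨g, hg0, hgs⟩ := mem_sepSpace.mp hsS
    have hmemU : ∀ k, e * g k * f ∈ U := by
      intro k
      simp only [hU, Submodule.mem_comap]
      have hφegf : φ (e * g k * f) = p * φ (g k) * q := by rw [hmul, hmul, hφe, hφf]
      rw [hφegf]
      exact LinearMap.mem_range.mpr ⟨φ (g k), rfl⟩
    set u : ℕ → U := fun k => ⟨e * g k * f, hmemU k⟩ with hu
    have hu0 : Tendsto u atTop (𝓝 0) := by
      rw [tendsto_subtype_rng]
      simpa using (tendsto_const_nhds.mul hg0).mul (tendsto_const_nhds (x := f))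
    have hvals : ∀ k, φU (u k) = p * φ (g k) * q := by
      intro k
      show φ (e * g k * f) = _
      rw [hmul, hmul, hφe, hφf]
    have h1' : Tendsto (fun k => φU (u k)) atTop (𝓝 v) := by
      simp only [hvals, hvs]
      exact (tendsto_const_nhds.mul hgs).mul tendsto_const_nhds
    have h2' : Tendsto (fun k => φU (u k)) atTop (𝓝 0) := by
      simpa [Function.comp_def] using (hφUc.tendsto 0).comp hu0
    exact hv0 (tendsto_nhds_unique h1' h2')
  · -- infinite-dimensional case
    exfalso
    obtain ⟨p, hidem, horth, ⟨C, hC⟩, hcase⟩ := h2 S hCI hfd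
    set e : ℕ → A := fun n => Function.surjInv hsurj (p n) with he
    have hφe : ∀ n, φ (e n) = p n := fun n => Function.surjInv_eq hsurj (p n)
    have heorth : ∀ m n, m ≠ n → e m * e n = 0 := by
      intro m n hmn
      apply hinj
      rw [hmul, hφe, hφe, horth m n hmn, map_zero]
    have heidem : ∀ n, e n * e n = e n := by
      intro n; apply hinj; rw [hmul, hφe]; exact hidem n
    rcases hcase with hL | hR
    · -- left case : pₙ S ≠ 0 for all n
      have hdiscont : ∀ (n : ℕ) (M : ℝ), ∃ a : A, M * ‖a‖ < ‖p n * φ a‖ := by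
        intro n M
        by_contra hcon
        push_neg at hcon
        obtain ⟨x, hxS, hx0⟩ := hL n
        apply hx0
        obtain ⟨f, hf0, hfx⟩ := mem_sepSpace.mp hxS
        have t1 : Tendsto (fun k => p n * φ (f k)) atTop (𝓝 (p n * x)) :=
          tendsto_const_nhds.mul hfx
        have t2 : Tendsto (fun k => p n * φ (f k)) atTop (𝓝 0) := by
          refine squeeze_zero_norm (fun k => hcon (f k)) ?_
          have hn0 : Tendsto (fun k => ‖f k‖) atTop (𝓝 0) := by simpa using hf0.norm
          simpa using tendsto_const_nhds.mul hn0
        exact tendsto_nhds_unique t1 t2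
      have hz : ∀ n : ℕ, ∃ z : A, ‖e n * z‖ ≤ (1/2:ℝ)^n ∧ (n:ℝ) ≤ ‖p n * φ z‖ := by
        intro n
        obtain ⟨a, ha⟩ := hdiscont n ((n+1) * 2^n * (‖e n‖ + 1))
        have hane : a ≠ 0 := by
          rintro rfl
          simp only [map_zero, mul_zero, norm_zero] at ha
          nlinarith [norm_nonneg (e n), ha]
        have hanorm : (0:ℝ) < ‖a‖ := norm_pos_iff.mpr hane
        set c : ℝ := (1/2:ℝ)^n / ((‖e n‖ + 1) * ‖a‖) with hc
        have hcpos : 0 < c := by positivity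
        have hnc : ‖(c:ℂ)‖ = c := by
          rw [Complex.norm_real, Real.norm_eq_abs, abs_of_pos hcpos]
        refine ⟨(c:ℂ) • a, ?_, ?_⟩
        · rw [mul_smul_comm, norm_smul, hnc]
          calc c * ‖e n * a‖ ≤ c * ((‖e n‖ + 1) * ‖a‖) := by
                have h1 := norm_mul_le (e n) a
                have h2 : ‖e n‖ * ‖a‖ ≤ (‖e n‖ + 1) * ‖a‖ := by nlinarith
                nlinarith
            _ = (1/2:ℝ)^n := by rw [hc]; exact div_mul_cancel₀ _ (by positivity)
        · rw [map_smul, mul_smul_comm, norm_smul, hnc]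
          have hkey : c * ((n+1) * 2^n * (‖e n‖ + 1) * ‖a‖) = n + 1 := by
            have h12 : (1/2:ℝ)^n * 2^n = 1 := by rw [← mul_pow]; norm_num
            have hW : ((‖e n‖ + 1) * ‖a‖) ≠ 0 := by positivity
            rw [hc, div_mul_eq_mul_div, div_eq_iff hW]
            linear_combination ((n+1) * (‖e n‖ + 1) * ‖a‖) * h12
          have : (n:ℝ) + 1 ≤ c * ‖p n * φ a‖ := by
            rw [← hkey]
            have := mul_lt_mul_of_pos_left ha hcpos
            nlinarith
          nlinarith [this]
      choose z hz1 hz2 using hz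
      have hsum : Summable (fun n => e n * z n) := by
        exact Summable.of_norm_bounded summable_geometric_two hz1
      set a : A := ∑' n, e n * z n with ha
      have hea : ∀ n, e n * a = e n * z n := by
        intro n
        have hmap := (ContinuousLinearMap.mul ℂ A (e n)).map_tsum hsum
        have hsingle : ∑' k, e n * (e k * z k) = e n * (e n * z n) :=
          tsum_eq_single n (fun k hk => by rw [← mul_assoc, heorth n k (Ne.symm hk), zero_mul])
        calc e n * a = ∑' k, e n * (e k * z k) := hmap
          _ = e n * (e n * z n) := hsingle
          _ = e n * z n := by rw [← mul_assoc, heidem]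
      have key : ∀ n : ℕ, (n:ℝ) ≤ C * ‖φ a‖ := by
        intro n
        have h1 : φ (e n * a) = p n * φ a := by rw [hmul, hφe]
        have h2 : φ (e n * a) = p n * φ (z n) := by rw [hea, hmul, hφe]
        calc (n:ℝ) ≤ ‖p n * φ (z n)‖ := hz2 n
          _ = ‖p n * φ a‖ := by rw [← h2, h1]
          _ ≤ ‖p n‖ * ‖φ a‖ := norm_mul_le _ _
          _ ≤ C * ‖φ a‖ := mul_le_mul_of_nonneg_right (hC n) (norm_nonneg _)
      obtain ⟨n, hn⟩ := exists_nat_gt (C * ‖φ a‖)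
      exact absurd (key n) (not_le.mpr hn)
    · -- right case : S pₙ ≠ 0 for all n
      have hdiscont : ∀ (n : ℕ) (M : ℝ), ∃ a : A, M * ‖a‖ < ‖φ a * p n‖ := by
        intro n M
        by_contra hcon
        push_neg at hcon
        obtain ⟨x, hxS, hx0⟩ := hR n
        apply hx0
        obtain ⟨f, hf0, hfx⟩ := mem_sepSpace.mp hxS
        have t1 : Tendsto (fun k => φ (f k) * p n) atTop (𝓝 (x * p n)) :=
          hfx.mul tendsto_const_nhds
        have t2 : Tendsto (fun k => φ (f k) * p n) atTop (𝓝 0) := by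
          refine squeeze_zero_norm (fun k => hcon (f k)) ?_
          have hn0 : Tendsto (fun k => ‖f k‖) atTop (𝓝 0) := by simpa using hf0.norm
          simpa using tendsto_const_nhds.mul hn0
        exact tendsto_nhds_unique t1 t2
      have hz : ∀ n : ℕ, ∃ z : A, ‖z * e n‖ ≤ (1/2:ℝ)^n ∧ (n:ℝ) ≤ ‖φ z * p n‖ := by
        intro n
        obtain ⟨a, ha⟩ := hdiscont n ((n+1) * 2^n * (‖e n‖ + 1))
        have hane : a ≠ 0 := by
          rintro rfl
          simp only [map_zero, zero_mul, norm_zero] at ha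
          nlinarith [norm_nonneg (e n), ha]
        have hanorm : (0:ℝ) < ‖a‖ := norm_pos_iff.mpr hane
        set c : ℝ := (1/2:ℝ)^n / ((‖e n‖ + 1) * ‖a‖) with hc
        have hcpos : 0 < c := by positivity
        have hnc : ‖(c:ℂ)‖ = c := by
          rw [Complex.norm_real, Real.norm_eq_abs, abs_of_pos hcpos]
        refine ⟨(c:ℂ) • a, ?_, ?_⟩
        · rw [smul_mul_assoc, norm_smul, hnc]
          calc c * ‖a * e n‖ ≤ c * ((‖e n‖ + 1) * ‖a‖) := by
                have h1 := norm_mul_le a (e n)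
                have h2 : ‖a‖ * ‖e n‖ ≤ (‖e n‖ + 1) * ‖a‖ := by nlinarith
                nlinarith
            _ = (1/2:ℝ)^n := by rw [hc]; exact div_mul_cancel₀ _ (by positivity)
        · rw [map_smul, smul_mul_assoc, norm_smul, hnc]
          have hkey : c * ((n+1) * 2^n * (‖e n‖ + 1) * ‖a‖) = n + 1 := by
            have h12 : (1/2:ℝ)^n * 2^n = 1 := by rw [← mul_pow]; norm_num
            have hW : ((‖e n‖ + 1) * ‖a‖) ≠ 0 := by positivity
            rw [hc, div_mul_eq_mul_div, div_eq_iff hW]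
            linear_combination ((n+1) * (‖e n‖ + 1) * ‖a‖) * h12
          have : (n:ℝ) + 1 ≤ c * ‖φ a * p n‖ := by
            rw [← hkey]
            have := mul_lt_mul_of_pos_left ha hcpos
            nlinarith
          nlinarith [this]
      choose z hz1 hz2 using hz
      have hsum : Summable (fun n => z n * e n) := by
        exact Summable.of_norm_bounded summable_geometric_two hz1
      set a : A := ∑' n, z n * e n with ha
      have hea : ∀ n, a * e n = z n * e n := by
        intro n
        have hmap := ((ContinuousLinearMap.mul ℂ A).flip (e n)).map_tsum hsum
        have hmap' : a * e n = ∑' k, z k * e k * e n := hmap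
        have hsingle : ∑' k, z k * e k * e n = z n * e n * e n :=
          tsum_eq_single n (fun k hk => by rw [mul_assoc, heorth k n hk, mul_zero])
        calc a * e n = ∑' k, z k * e k * e n := hmap'
          _ = z n * e n * e n := hsingle
          _ = z n * e n := by rw [mul_assoc, heidem]
      have key : ∀ n : ℕ, (n:ℝ) ≤ C * ‖φ a‖ := by
        intro n
        have h1 : φ (a * e n) = φ a * p n := by rw [hmul, hφe]
        have h2 : φ (a * e n) = φ (z n) * p n := by rw [hea, hmul, hφe]
        calc (n:ℝ) ≤ ‖φ (z n) * p n‖ := hz2 n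
          _ = ‖φ a * p n‖ := by rw [← h2, h1]
          _ ≤ ‖φ a‖ * ‖p n‖ := norm_mul_le _ _
          _ ≤ ‖φ a‖ * C := mul_le_mul_of_nonneg_left (hC n) (norm_nonneg _)
          _ = C * ‖φ a‖ := mul_comm _ _
      obtain ⟨n, hn⟩ := exists_nat_gt (C * ‖φ a‖)
      exact absurd (key n) (not_le.mpr hn)
end

section
/- Let B be a Banach algebra such that every nonzero closed two-sided ideal I of B admits a sequence (p_n)_{n=1}^∞ of pairwise orthogonal idempotents in B with sup_n ‖p_n‖ < ∞ such that either for every n there is x ∈ I with p_n x ≠ 0, or for every n there is x ∈ I with x p_n ≠ 0. Then every surjective algebra homomorphism φ : A → B from any Banach algebra A onto B is continuous. -/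
open Filter Topology

universe u v


section Seg

variable {A : Type*} [NonUnitalNormedRing A] [NormedSpace ℂ A]
  [IsScalarTower ℂ A A] [SMulCommClass ℂ A A]

/-- composition `N m ∘ N (m+1) ∘ ⋯ ∘ N (j-1)` where `N i a = a - q i * a`. -/
noncomputable def segProd (q : ℕ → A) (m j : ℕ) : A →L[ℂ] A :=
  ((List.range' m (j - m)).map
    (fun i => ContinuousLinearMap.id ℂ A - ContinuousLinearMap.mul ℂ A (q i))).prod

lemma segProd_self (q : ℕ → A) (m : ℕ) : segProd q m m = 1 := by
  simp [segProd]

lemma segProd_succ (q : ℕ → A) {m j : ℕ} (h : m ≤ j) :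
    segProd q m (j + 1) = segProd q m j *
      (ContinuousLinearMap.id ℂ A - ContinuousLinearMap.mul ℂ A (q j)) := by
  have h1 : j + 1 - m = (j - m) + 1 := by omega
  have h2 : m + 1 * (j - m) = j := by omega
  rw [segProd, h1, List.range'_concat, List.map_append, List.prod_append, h2]
  simp [segProd]

lemma segProd_split (q : ℕ → A) {m j : ℕ} (h : m ≤ j) :
    segProd q 0 j = segProd q 0 m * segProd q m j := by
  have h2 : 0 + 1 * m = m := by omega
  have h3 : j - 0 = (j - m) + m := by omega
  rw [segProd, segProd, segProd, ← List.prod_append, ← List.map_append]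
  rw [show (m - 0) = m by omega, h3, Nat.add_comm (j-m) m,
    ← List.range'_append (s := 0) (m := m) (n := j-m) (step := 1), h2]

lemma segProd_norm_le (q : ℕ → A) {m j : ℕ} (h : m ≤ j) (a : A) :
    ‖segProd q m j a‖ ≤ (∏ i ∈ Finset.Ico m j, (1 + ‖q i‖)) * ‖a‖ := by
  induction j, h using Nat.le_induction generalizing a with
  | base => simp [segProd_self]
  | succ j hmj ih =>
    rw [segProd_succ q hmj, ContinuousLinearMap.mul_apply]
    have h1 : ‖(ContinuousLinearMap.id ℂ A - ContinuousLinearMap.mul ℂ A (q j)) a‖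
        ≤ (1 + ‖q j‖) * ‖a‖ := by
      simp only [ContinuousLinearMap.sub_apply, ContinuousLinearMap.id_apply,
        ContinuousLinearMap.mul_apply']
      calc ‖a - q j * a‖ ≤ ‖a‖ + ‖q j * a‖ := norm_sub_le _ _
        _ ≤ ‖a‖ + ‖q j‖ * ‖a‖ := by gcongr; exact norm_mul_le _ _
        _ = (1 + ‖q j‖) * ‖a‖ := by ring
    calc ‖segProd q m j ((ContinuousLinearMap.id ℂ A - ContinuousLinearMap.mul ℂ A (q j)) a)‖
        ≤ (∏ i ∈ Finset.Ico m j, (1 + ‖q i‖)) *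
          ‖(ContinuousLinearMap.id ℂ A - ContinuousLinearMap.mul ℂ A (q j)) a‖ := ih _
      _ ≤ (∏ i ∈ Finset.Ico m j, (1 + ‖q i‖)) * ((1 + ‖q j‖) * ‖a‖) := by
          apply mul_le_mul_of_nonneg_left h1
          exact Finset.prod_nonneg fun i _ => by positivity
      _ = (∏ i ∈ Finset.Ico m (j+1), (1 + ‖q i‖)) * ‖a‖ := by
          rw [Finset.prod_Ico_succ_top hmj]; ring

end Seg

section Phi
variable {A : Type*} {B : Type*} [NonUnitalNormedRing A] [NormedSpace ℂ A]
  [IsScalarTower ℂ A A] [SMulCommClass ℂ A A]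
  [NonUnitalNormedRing B] [NormedSpace ℂ B]

lemma segProd_phi (φ : A →ₗ[ℂ] B) (hmul : ∀ x y : A, φ (x * y) = φ x * φ y)
    (p : ℕ → B) (q : ℕ → A) (hq : ∀ n, φ (q n) = p n)
    (horth : ∀ m n, m ≠ n → p m * p n = 0)
    {m j : ℕ} (h : m ≤ j) (a : A) :
    φ (segProd q m j a) = φ a - (∑ i ∈ Finset.Ico m j, p i) * φ a := by
  induction j, h using Nat.le_induction generalizing a with
  | base => simp [segProd_self]
  | succ j hmj ih =>
    rw [segProd_succ q hmj, ContinuousLinearMap.mul_apply, ih]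
    have hNa : φ ((ContinuousLinearMap.id ℂ A - ContinuousLinearMap.mul ℂ A (q j)) a)
        = φ a - p j * φ a := by
      simp only [ContinuousLinearMap.sub_apply, ContinuousLinearMap.id_apply,
        ContinuousLinearMap.mul_apply', map_sub, hmul, hq]
    rw [hNa]
    have hQp : (∑ i ∈ Finset.Ico m j, p i) * (p j * φ a) = 0 := by
      rw [← mul_assoc, Finset.sum_mul]
      have : ∀ i ∈ Finset.Ico m j, p i * p j = 0 := fun i hi =>
        horth i j (Nat.ne_of_lt (Finset.mem_Ico.mp hi).2)
      rw [Finset.sum_congr rfl this]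
      simp
    rw [Finset.sum_Ico_succ_top hmj, mul_sub, hQp, add_mul]
    abel

end Phi

noncomputable def tRec (C : ℝ) (g h : ℕ → ℝ) : ℕ → ℝ
  | 0 => 0
  | (m+1) => tRec C g h m + (((m:ℝ) + C * (1 + tRec C g h m) + 1) / g m * h m + 1)

section Hump

variable {A : Type*} {B : Type*} [NonUnitalNormedRing A] [NormedSpace ℂ A]
  [IsScalarTower ℂ A A] [SMulCommClass ℂ A A] [CompleteSpace A]
  [NonUnitalNormedRing B] [NormedSpace ℂ B] [SMulCommClass ℂ B B]

lemma gliding_hump (φ : A →ₗ[ℂ] B) (hmul : ∀ x y : A, φ (x * y) = φ x * φ y)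
    (p : ℕ → B) (q : ℕ → A) (hq : ∀ n, φ (q n) = p n)
    (hidem : ∀ n, p n * p n = p n) (horth : ∀ m n, m ≠ n → p m * p n = 0)
    (C : ℝ) (hC : ∀ n, ‖p n‖ ≤ C)
    (x : ℕ → B)
    (hsep : ∀ n, ∀ ε > 0, ∃ a : A, ‖a‖ < ε ∧ ‖φ a - x n‖ < ε)
    (hx : ∀ n, p n * x n ≠ 0) : False := by
  have hC0 : 0 ≤ C := le_trans (norm_nonneg _) (hC 0)
  obtain ⟨P, hPdef⟩ : ∃ P : ℕ → B, ∀ m, P m = ∑ i ∈ Finset.range m, p i :=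
    ⟨_, fun m => rfl⟩
  obtain ⟨y0, hy0def⟩ : ∃ y0 : ℕ → B, ∀ m, y0 m = x m - P m * x m :=
    ⟨_, fun m => rfl⟩
  have hpP : ∀ m, p m * P m = 0 := by
    intro m
    rw [hPdef, Finset.mul_sum]
    exact Finset.sum_eq_zero fun i hi => horth m i (Finset.mem_range.mp hi).ne'
  have hpy0 : ∀ m, p m * y0 m = p m * x m := by
    intro m
    rw [hy0def, mul_sub, ← mul_assoc, hpP m, zero_mul, sub_zero]
  have hg : ∀ m, 0 < ‖p m * y0 m‖ := fun m => by
    rw [hpy0]; exact norm_pos_iff.mpr (hx m)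
  obtain ⟨t, ht0eq, htsucc0⟩ : ∃ t : ℕ → ℝ, t 0 = 0 ∧ ∀ m,
      t (m+1) = t m + (((m:ℝ) + C * (1 + t m) + 1) / ‖p m * y0 m‖ * ‖y0 m‖ + 1) :=
    ⟨tRec C (fun k => ‖p k * y0 k‖) (fun k => ‖y0 k‖), rfl, fun m => rfl⟩
  obtain ⟨R, hRdef⟩ : ∃ R : ℕ → ℝ, ∀ m, R m = (m:ℝ) + C * (1 + t m) + 1 :=
    ⟨_, fun m => rfl⟩
  obtain ⟨s, hsdef⟩ : ∃ s : ℕ → ℝ, ∀ m, s m = R m / ‖p m * y0 m‖ :=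
    ⟨_, fun m => rfl⟩
  have htsucc : ∀ m, t (m+1) = t m + (s m * ‖y0 m‖ + 1) := by
    intro m
    rw [htsucc0 m, hsdef m, hRdef m]
  have ht0 : ∀ m, 0 ≤ t m := by
    intro m
    induction m with
    | zero => rw [ht0eq]
    | succ k ih =>
      have hRk : 0 < R k := by
        rw [hRdef]
        have h1 : 0 ≤ C * (1 + t k) := mul_nonneg hC0 (by linarith)
        have h2 : (0:ℝ) ≤ (k:ℝ) := Nat.cast_nonneg k
        linarith
      have hsk : 0 ≤ s k := by
        rw [hsdef]
        exact div_nonneg hRk.le (norm_nonneg _)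
      rw [htsucc k]
      have := mul_nonneg hsk (norm_nonneg (y0 k))
      linarith
  have hRpos : ∀ m, 0 < R m := by
    intro m
    rw [hRdef]
    have h1 : 0 ≤ C * (1 + t m) := mul_nonneg hC0 (by linarith [ht0 m])
    have h2 : (0:ℝ) ≤ (m:ℝ) := Nat.cast_nonneg m
    linarith
  have hs0 : ∀ m, 0 ≤ s m := fun m => by
    rw [hsdef]; exact div_nonneg (hRpos m).le (norm_nonneg _)
  obtain ⟨y, hydef⟩ : ∃ y : ℕ → B, ∀ m, y m = ((s m : ℝ) : ℂ) • y0 m :=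
    ⟨_, fun m => rfl⟩
  have hnormy : ∀ m, ‖y m‖ = s m * ‖y0 m‖ := by
    intro m
    rw [hydef, norm_smul, Complex.norm_real, Real.norm_eq_abs, abs_of_nonneg (hs0 m)]
  have hnormpy : ∀ m, ‖p m * y m‖ = R m := by
    intro m
    rw [hydef, mul_smul_comm, norm_smul, Complex.norm_real, Real.norm_eq_abs,
      abs_of_nonneg (hs0 m), hsdef, div_mul_cancel₀]
    exact (hg m).ne'
  obtain ⟨K, hKdef⟩ : ∃ K : ℕ → ℝ, ∀ j, K j = ∏ i ∈ Finset.range j, (1 + ‖q i‖) :=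
    ⟨_, fun m => rfl⟩
  have hK1 : ∀ j, 1 ≤ K j := by
    intro j
    rw [hKdef]
    calc (1:ℝ) = ∏ _i ∈ Finset.range j, 1 := Finset.prod_const_one.symm
      _ ≤ ∏ i ∈ Finset.range j, (1 + ‖q i‖) :=
          Finset.prod_le_prod (fun i _ => zero_le_one)
            (fun i _ => by linarith [norm_nonneg (q i)])
  have hKpos : ∀ j, 0 < K j := fun j => lt_of_lt_of_le one_pos (hK1 j)
  obtain ⟨ε, hεdef⟩ : ∃ ε : ℕ → ℝ, ∀ j, ε j = (1/2:ℝ)^j / K j := ⟨_, fun m => rfl⟩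
  have hεpos : ∀ j, 0 < ε j := fun j => by
    rw [hεdef]; exact div_pos (by positivity) (hKpos j)
  have hseg_le : ∀ m j, m ≤ j → ∀ a : A, ‖segProd q m j a‖ ≤ K j * ‖a‖ := by
    intro m j hmj a
    calc ‖segProd q m j a‖ ≤ (∏ i ∈ Finset.Ico m j, (1 + ‖q i‖)) * ‖a‖ :=
          segProd_norm_le q hmj a
      _ ≤ K j * ‖a‖ := by
          apply mul_le_mul_of_nonneg_right _ (norm_nonneg a)
          rw [hKdef, Finset.range_eq_Ico,
            ← Finset.prod_Ico_consecutive _ (Nat.zero_le m) hmj]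
          have hone : (1:ℝ) ≤ ∏ i ∈ Finset.Ico 0 m, (1 + ‖q i‖) := by
            calc (1:ℝ) = ∏ _i ∈ Finset.Ico 0 m, 1 := Finset.prod_const_one.symm
              _ ≤ ∏ i ∈ Finset.Ico 0 m, (1 + ‖q i‖) :=
                  Finset.prod_le_prod (fun i _ => zero_le_one)
                    (fun i _ => by linarith [norm_nonneg (q i)])
          have hnn : (0:ℝ) ≤ ∏ i ∈ Finset.Ico m j, (1 + ‖q i‖) :=
            Finset.prod_nonneg fun i _ => by positivity
          exact le_mul_of_one_le_left hnn hone
  -- choice of the elements a m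
  have hchoice : ∀ m, ∃ a : A, ‖a‖ < ε m ∧ ‖φ (segProd q 0 m a) - y m‖ ≤ 1 := by
    intro m
    have h1s : (0:ℝ) < 1 + s m := by linarith [hs0 m]
    have h1P : (0:ℝ) < 1 + ‖P m‖ := by linarith [norm_nonneg (P m)]
    obtain ⟨δ, hδdef⟩ : ∃ δ : ℝ,
        δ = min (ε m / (1 + s m)) (1 / ((1 + s m) * (1 + ‖P m‖))) := ⟨_, rfl⟩
    have hδ : 0 < δ := by
      rw [hδdef]
      exact lt_min (div_pos (hεpos m) h1s) (div_pos one_pos (by positivity))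
    obtain ⟨a0, ha0, ha0'⟩ := hsep m δ hδ
    refine ⟨((s m : ℝ) : ℂ) • a0, ?_, ?_⟩
    · rw [norm_smul, Complex.norm_real, Real.norm_eq_abs, abs_of_nonneg (hs0 m)]
      have h1 : s m * ‖a0‖ ≤ s m * δ := mul_le_mul_of_nonneg_left ha0.le (hs0 m)
      have h2 : δ ≤ ε m / (1 + s m) := hδdef ▸ min_le_left _ _
      have h3 : (ε m / (1 + s m)) * (1 + s m) = ε m := div_mul_cancel₀ _ h1s.ne'
      nlinarith [hεpos m, hs0 m]
    · have hsegφ : φ (segProd q 0 m (((s m : ℝ) : ℂ) • a0))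
          = ((s m : ℝ) : ℂ) • (φ a0 - P m * φ a0) := by
        rw [map_smul, map_smul, segProd_phi φ hmul p q hq horth (Nat.zero_le m),
          ← Finset.range_eq_Ico, ← hPdef]
      rw [hsegφ, hydef, ← smul_sub]
      have hre : (φ a0 - P m * φ a0) - (x m - P m * x m)
          = (φ a0 - x m) - P m * (φ a0 - x m) := by
        rw [mul_sub]; abel
      rw [hy0def, hre, norm_smul, Complex.norm_real, Real.norm_eq_abs,
        abs_of_nonneg (hs0 m)]
      have h2 : ‖(φ a0 - x m) - P m * (φ a0 - x m)‖ ≤ (1 + ‖P m‖) * ‖φ a0 - x m‖ := by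
        calc ‖(φ a0 - x m) - P m * (φ a0 - x m)‖
            ≤ ‖φ a0 - x m‖ + ‖P m * (φ a0 - x m)‖ := norm_sub_le _ _
          _ ≤ ‖φ a0 - x m‖ + ‖P m‖ * ‖φ a0 - x m‖ := by
              linarith [norm_mul_le (P m) (φ a0 - x m)]
          _ = (1 + ‖P m‖) * ‖φ a0 - x m‖ := by ring
      have h3 : δ ≤ 1 / ((1 + s m) * (1 + ‖P m‖)) := hδdef ▸ min_le_right _ _
      have h4 : δ * ((1 + s m) * (1 + ‖P m‖)) ≤ 1 := by
        rw [← le_div_iff₀ (by positivity)]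
        exact h3
      have h5 : ‖φ a0 - x m‖ ≤ δ := ha0'.le
      have h6 : ‖(φ a0 - x m) - P m * (φ a0 - x m)‖ ≤ (1 + ‖P m‖) * δ := by
        nlinarith [norm_nonneg (φ a0 - x m)]
      calc s m * ‖(φ a0 - x m) - P m * (φ a0 - x m)‖ ≤ s m * ((1 + ‖P m‖) * δ) :=
            mul_le_mul_of_nonneg_left h6 (hs0 m)
        _ ≤ 1 := by nlinarith [hs0 m, hδ.le]
  choose a ha1 ha2 using hchoice
  -- the series
  obtain ⟨v, hvdef⟩ : ∃ v : ℕ → A, ∀ j, v j = segProd q 0 j (a j) := ⟨_, fun m => rfl⟩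
  have hvle : ∀ j, ‖v j‖ ≤ (1/2:ℝ)^j := by
    intro j
    rw [hvdef]
    calc ‖segProd q 0 j (a j)‖ ≤ K j * ‖a j‖ := hseg_le 0 j (Nat.zero_le j) (a j)
      _ ≤ K j * ε j := mul_le_mul_of_nonneg_left (ha1 j).le (hKpos j).le
      _ = (1/2:ℝ)^j := by
          rw [hεdef, mul_div_cancel₀]
          exact (hKpos j).ne'
  have hsumv : Summable v := Summable.of_norm_bounded summable_geometric_two hvle
  obtain ⟨u, hudef⟩ : ∃ u : A, u = ∑' j, v j := ⟨_, rfl⟩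
  obtain ⟨b, hbdef⟩ : ∃ b : B, b = φ u := ⟨_, rfl⟩
  -- main estimate
  have key : ∀ m : ℕ, (m:ℝ) + 1 ≤ C * ‖b‖ := by
    intro m
    -- tail
    have hsumw : Summable (fun i => segProd q (m+1) (i+(m+1)) (a (i+(m+1)))) := by
      apply Summable.of_norm_bounded (g := fun i => (1/2:ℝ)^i) summable_geometric_two
      intro i
      calc ‖segProd q (m+1) (i+(m+1)) (a (i+(m+1)))‖
          ≤ K (i+(m+1)) * ‖a (i+(m+1))‖ :=
            hseg_le (m+1) (i+(m+1)) (Nat.le_add_left _ _) _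
        _ ≤ K (i+(m+1)) * ε (i+(m+1)) :=
            mul_le_mul_of_nonneg_left (ha1 _).le (hKpos _).le
        _ = (1/2:ℝ)^(i+(m+1)) := by
            rw [hεdef, mul_div_cancel₀]
            exact (hKpos _).ne'
        _ ≤ (1/2:ℝ)^i := by
            apply pow_le_pow_of_le_one (by norm_num) (by norm_num)
            omega
    obtain ⟨w, hwdef⟩ : ∃ w : A, w = ∑' i, segProd q (m+1) (i+(m+1)) (a (i+(m+1))) :=
      ⟨_, rfl⟩
    have htail : ∑' i, v (i + (m+1)) = segProd q 0 (m+1) w := by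
      have h1 : ∀ i, v (i + (m+1))
          = segProd q 0 (m+1) (segProd q (m+1) (i+(m+1)) (a (i+(m+1)))) := by
        intro i
        rw [hvdef, segProd_split q (Nat.le_add_left (m+1) i), ContinuousLinearMap.mul_apply]
      rw [tsum_congr h1, hwdef, (segProd q 0 (m+1)).map_tsum hsumw]
    have hu : u = (∑ j ∈ Finset.range (m+1), v j) + segProd q 0 (m+1) w := by
      rw [hudef, ← htail, Summable.sum_add_tsum_nat_add (m+1) hsumv]
    -- p m * b
    have hPm1 : p m * P (m+1) = p m := by
      rw [hPdef, Finset.mul_sum]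
      rw [Finset.sum_eq_single m (fun i _ hne => horth m i (Ne.symm hne))
        (fun h => absurd (Finset.self_mem_range_succ m) h)]
      exact hidem m
    have hsegw : φ (segProd q 0 (m+1) w) = φ w - P (m+1) * φ w := by
      rw [segProd_phi φ hmul p q hq horth (Nat.zero_le (m+1)), ← Finset.range_eq_Ico,
        ← hPdef]
    have hpsegw : p m * φ (segProd q 0 (m+1) w) = 0 := by
      rw [hsegw, mul_sub, ← mul_assoc, hPm1, sub_self]
    have hpb : p m * b = ∑ j ∈ Finset.range (m+1), p m * φ (v j) := by
      rw [hbdef, hu, map_add, map_sum, mul_add, hpsegw, add_zero, Finset.mul_sum]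
    -- lower bound
    have hsplit : p m * y m = p m * b - (∑ j ∈ Finset.range m, p m * φ (v j))
        - p m * (φ (v m) - y m) := by
      rw [hpb, Finset.sum_range_succ, mul_sub]
      abel
    have hb1 : ‖p m * b‖ ≤ C * ‖b‖ := by
      calc ‖p m * b‖ ≤ ‖p m‖ * ‖b‖ := norm_mul_le _ _
        _ ≤ C * ‖b‖ := mul_le_mul_of_nonneg_right (hC m) (norm_nonneg b)
    have hb2 : ∀ j, j < m → ‖p m * φ (v j)‖ ≤ C * (‖y j‖ + 1) := by
      intro j _
      have h1 : ‖φ (v j)‖ ≤ ‖y j‖ + 1 := by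
        have : φ (v j) = y j + (φ (v j) - y j) := by abel
        rw [this]
        calc ‖y j + (φ (v j) - y j)‖ ≤ ‖y j‖ + ‖φ (v j) - y j‖ := norm_add_le _ _
          _ ≤ ‖y j‖ + 1 := by
              have := ha2 j
              rw [← hvdef j] at this
              linarith
      calc ‖p m * φ (v j)‖ ≤ ‖p m‖ * ‖φ (v j)‖ := norm_mul_le _ _
        _ ≤ C * (‖y j‖ + 1) := mul_le_mul (hC m) h1 (norm_nonneg _) hC0
    have hb3 : ‖p m * (φ (v m) - y m)‖ ≤ C := by
      calc ‖p m * (φ (v m) - y m)‖ ≤ ‖p m‖ * ‖φ (v m) - y m‖ := norm_mul_le _ _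
        _ ≤ C * 1 := by
            apply mul_le_mul (hC m) _ (norm_nonneg _) hC0
            have := ha2 m
            rw [← hvdef m] at this
            exact this
        _ = C := mul_one C
    have hty : ∀ n : ℕ, (∑ j ∈ Finset.range n, (‖y j‖ + 1)) = t n := by
      intro n
      induction n with
      | zero => rw [Finset.sum_range_zero, ht0eq]
      | succ k ih => rw [Finset.sum_range_succ, ih, htsucc k, hnormy k]
    have hsum_le : ‖∑ j ∈ Finset.range m, p m * φ (v j)‖ ≤ C * t m := by
      calc ‖∑ j ∈ Finset.range m, p m * φ (v j)‖
          ≤ ∑ j ∈ Finset.range m, ‖p m * φ (v j)‖ := norm_sum_le _ _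
        _ ≤ ∑ j ∈ Finset.range m, C * (‖y j‖ + 1) :=
            Finset.sum_le_sum fun j hj => hb2 j (Finset.mem_range.mp hj)
        _ = C * t m := by rw [← Finset.mul_sum, hty m]
    have hfinal : R m ≤ C * ‖b‖ + C * t m + C := by
      rw [← hnormpy m, hsplit]
      have e1 := norm_sub_le (p m * b - (∑ j ∈ Finset.range m, p m * φ (v j)))
        (p m * (φ (v m) - y m))
      have e2 := norm_sub_le (p m * b) (∑ j ∈ Finset.range m, p m * φ (v j))
      linarith [hb1, hsum_le, hb3, e1, e2]
    rw [hRdef] at hfinal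
    linarith
  obtain ⟨m, hm⟩ := exists_nat_gt (C * ‖b‖)
  linarith [key m]

end Hump

/-- Abstract form of Corollary 1.5: if every nonzero closed two-sided ideal of the Banach
algebra `B` admits a norm-bounded sequence of pairwise orthogonal idempotents, each of
which fails to annihilate the ideal on the left (or each of which fails to annihilate it
on the right), then every surjective algebra homomorphism from any Banach algebra onto `B`
is continuous. -/
theorem epimorphism_continuous
    {B : Type v} [NonUnitalNormedRing B] [NormedSpace ℂ B] [IsScalarTower ℂ B B]
    [SMulCommClass ℂ B B] [CompleteSpace B]
    (hB : ∀ I : Submodule ℂ B, IsClosedIdeal I → I ≠ ⊥ →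
      ∃ p : ℕ → B, (∀ n, p n * p n = p n) ∧ (∀ m n, m ≠ n → p m * p n = 0) ∧
        (∃ C : ℝ, ∀ n, ‖p n‖ ≤ C) ∧
        ((∀ n, ∃ x ∈ I, p n * x ≠ 0) ∨ (∀ n, ∃ x ∈ I, x * p n ≠ 0))) :
    ∀ (A : Type u) [NonUnitalNormedRing A] [NormedSpace ℂ A] [IsScalarTower ℂ A A]
      [SMulCommClass ℂ A A] [CompleteSpace A],
      ∀ φ : A →ₗ[ℂ] B, (∀ x y : A, φ (x * y) = φ x * φ y) → Function.Surjective φ →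
        Continuous φ := by
  intro A _ _ _ _ _ φ hmul hsurj
  classical
  -- the separating space of φ
  set S : Submodule ℂ B :=
    { carrier := {b | ∀ ε > 0, ∃ a : A, ‖a‖ < ε ∧ ‖φ a - b‖ < ε}
      add_mem' := by
        intro b₁ b₂ h1 h2 ε hε
        obtain ⟨a₁, ha₁, ha₁'⟩ := h1 (ε/2) (by linarith)
        obtain ⟨a₂, ha₂, ha₂'⟩ := h2 (ε/2) (by linarith)
        refine ⟨a₁ + a₂, ?_, ?_⟩
        · calc ‖a₁ + a₂‖ ≤ ‖a₁‖ + ‖a₂‖ := norm_add_le _ _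
            _ < ε := by linarith
        · have : φ (a₁ + a₂) - (b₁ + b₂) = (φ a₁ - b₁) + (φ a₂ - b₂) := by
            rw [map_add]; abel
          rw [this]
          calc ‖(φ a₁ - b₁) + (φ a₂ - b₂)‖ ≤ ‖φ a₁ - b₁‖ + ‖φ a₂ - b₂‖ := norm_add_le _ _
            _ < ε := by linarith
      zero_mem' := by
        intro ε hε
        exact ⟨0, by simpa using hε, by simpa using hε⟩
      smul_mem' := by
        intro c b hb ε hε
        by_cases hc : c = 0
        · subst hc
          rw [zero_smul]
          exact ⟨0, by simpa using hε, by simpa using hε⟩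
        · have hcn : 0 < ‖c‖ := norm_pos_iff.mpr hc
          obtain ⟨a, ha, ha'⟩ := hb (ε/‖c‖) (div_pos hε hcn)
          refine ⟨c • a, ?_, ?_⟩
          · rw [norm_smul]
            calc ‖c‖ * ‖a‖ < ‖c‖ * (ε/‖c‖) := by
                  exact mul_lt_mul_of_pos_left ha hcn
              _ = ε := mul_div_cancel₀ _ hcn.ne'
          · rw [map_smul, ← smul_sub, norm_smul]
            calc ‖c‖ * ‖φ a - b‖ < ‖c‖ * (ε/‖c‖) := mul_lt_mul_of_pos_left ha' hcn
              _ = ε := mul_div_cancel₀ _ hcn.ne' } with hSdef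
  have hmem : ∀ b : B, b ∈ S ↔ ∀ ε > 0, ∃ a : A, ‖a‖ < ε ∧ ‖φ a - b‖ < ε :=
    fun b => Iff.rfl
  -- S is closed
  have hclosed : IsClosed (S : Set B) := by
    apply isClosed_of_closure_subset
    intro b hb
    rw [SetLike.mem_coe, hmem]
    intro ε hε
    obtain ⟨c, hcS, hcd⟩ := Metric.mem_closure_iff.mp hb (ε/2) (by linarith)
    obtain ⟨a, ha, ha'⟩ := (hmem c).mp hcS (ε/2) (by linarith)
    refine ⟨a, by linarith, ?_⟩
    have : φ a - b = (φ a - c) + (c - b) := by abel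
    rw [this]
    have hd : ‖c - b‖ < ε/2 := by
      rw [dist_eq_norm] at hcd
      rw [← norm_neg]
      simpa [neg_sub] using hcd
    calc ‖(φ a - c) + (c - b)‖ ≤ ‖φ a - c‖ + ‖c - b‖ := norm_add_le _ _
      _ < ε := by linarith
  -- S is a two-sided ideal
  have hleft : ∀ c : B, ∀ z ∈ S, c * z ∈ S := by
    intro c z hz
    obtain ⟨e, he⟩ := hsurj c
    rw [hmem]
    intro ε hε
    have h1e : (0:ℝ) < 1 + ‖e‖ := by linarith [norm_nonneg e]
    have h1c : (0:ℝ) < 1 + ‖c‖ := by linarith [norm_nonneg c]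
    obtain ⟨a, ha, ha'⟩ := (hmem z).mp hz (min (ε/(1+‖e‖)) (ε/(1+‖c‖)))
      (lt_min (div_pos hε h1e) (div_pos hε h1c))
    refine ⟨e * a, ?_, ?_⟩
    · have h2 : ‖a‖ < ε/(1+‖e‖) := lt_of_lt_of_le ha (min_le_left _ _)
      have h3 : (ε/(1+‖e‖)) * (1+‖e‖) = ε := div_mul_cancel₀ _ h1e.ne'
      calc ‖e * a‖ ≤ ‖e‖ * ‖a‖ := norm_mul_le _ _
        _ < ε := by nlinarith [norm_nonneg e, norm_nonneg a]
    · have h2 : ‖φ a - z‖ < ε/(1+‖c‖) := lt_of_lt_of_le ha' (min_le_right _ _)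
      have h3 : (ε/(1+‖c‖)) * (1+‖c‖) = ε := div_mul_cancel₀ _ h1c.ne'
      have h4 : φ (e * a) - c * z = c * (φ a - z) := by
        rw [hmul, he, mul_sub]
      rw [h4]
      calc ‖c * (φ a - z)‖ ≤ ‖c‖ * ‖φ a - z‖ := norm_mul_le _ _
        _ < ε := by nlinarith [norm_nonneg c, norm_nonneg (φ a - z)]
  have hright : ∀ c : B, ∀ z ∈ S, z * c ∈ S := by
    intro c z hz
    obtain ⟨e, he⟩ := hsurj c
    rw [hmem]
    intro ε hε
    have h1e : (0:ℝ) < 1 + ‖e‖ := by linarith [norm_nonneg e]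
    have h1c : (0:ℝ) < 1 + ‖c‖ := by linarith [norm_nonneg c]
    obtain ⟨a, ha, ha'⟩ := (hmem z).mp hz (min (ε/(1+‖e‖)) (ε/(1+‖c‖)))
      (lt_min (div_pos hε h1e) (div_pos hε h1c))
    refine ⟨a * e, ?_, ?_⟩
    · have h2 : ‖a‖ < ε/(1+‖e‖) := lt_of_lt_of_le ha (min_le_left _ _)
      have h3 : (ε/(1+‖e‖)) * (1+‖e‖) = ε := div_mul_cancel₀ _ h1e.ne'
      calc ‖a * e‖ ≤ ‖a‖ * ‖e‖ := norm_mul_le _ _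
        _ < ε := by nlinarith [norm_nonneg e, norm_nonneg a]
    · have h2 : ‖φ a - z‖ < ε/(1+‖c‖) := lt_of_lt_of_le ha' (min_le_right _ _)
      have h3 : (ε/(1+‖c‖)) * (1+‖c‖) = ε := div_mul_cancel₀ _ h1c.ne'
      have h4 : φ (a * e) - z * c = (φ a - z) * c := by
        rw [hmul, he, sub_mul]
      rw [h4]
      calc ‖(φ a - z) * c‖ ≤ ‖φ a - z‖ * ‖c‖ := norm_mul_le _ _
        _ < ε := by nlinarith [norm_nonneg c, norm_nonneg (φ a - z)]
  by_cases hS : S = ⊥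
  · -- φ has closed graph, hence is continuous
    apply LinearMap.continuous_of_isClosed_graph
    apply IsSeqClosed.isClosed
    intro f z hf hfz
    rw [SetLike.mem_coe, LinearMap.mem_graph_iff]
    have hz : z.2 - φ z.1 ∈ S := by
      rw [hmem]
      intro ε hε
      have h1 : Filter.Tendsto (fun n => (f n).1) Filter.atTop (nhds z.1) :=
        (continuous_fst.tendsto z).comp hfz
      have h2 : Filter.Tendsto (fun n => (f n).2) Filter.atTop (nhds z.2) :=
        (continuous_snd.tendsto z).comp hfz
      obtain ⟨N₁, hN₁⟩ := Metric.tendsto_atTop.mp h1 (ε/2) (by linarith)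
      obtain ⟨N₂, hN₂⟩ := Metric.tendsto_atTop.mp h2 (ε/2) (by linarith)
      set n := max N₁ N₂
      have e1 : ‖(f n).1 - z.1‖ < ε/2 := by
        rw [← dist_eq_norm]; exact hN₁ n (le_max_left _ _)
      have e2 : ‖(f n).2 - z.2‖ < ε/2 := by
        rw [← dist_eq_norm]; exact hN₂ n (le_max_right _ _)
      refine ⟨(f n).1 - z.1, by linarith, ?_⟩
      have hfn : (f n).2 = φ (f n).1 := by
        have := hf n
        rw [SetLike.mem_coe, LinearMap.mem_graph_iff] at this
        exact this
      have : φ ((f n).1 - z.1) - (z.2 - φ z.1) = (f n).2 - z.2 := by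
        rw [map_sub, hfn]; abel
      rw [this]
      linarith
    rw [hS, Submodule.mem_bot, sub_eq_zero] at hz
    exact hz
  · -- contradiction with the gliding hump
    exfalso
    obtain ⟨p, hidem, horth, ⟨C, hC⟩, hcase⟩ := hB S ⟨hclosed, hleft, hright⟩ hS
    choose q hq using fun n => hsurj (p n)
    rcases hcase with hcase | hcase
    · -- left version : directly
      choose x hxS hxne using hcase
      exact gliding_hump φ hmul p q hq hidem horth C hC x
        (fun n => (hmem (x n)).mp (hxS n)) hxne
    · -- right version : pass to the opposite algebras
      choose x hxS hxne using hcase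
      set φ' : Aᵐᵒᵖ →ₗ[ℂ] Bᵐᵒᵖ :=
        { toFun := fun u => MulOpposite.op (φ u.unop)
          map_add' := by intros; simp
          map_smul' := by intros; simp } with hφ'def
      have hφ'op : ∀ a : A, φ' (MulOpposite.op a) = MulOpposite.op (φ a) := fun a => rfl
      have hmul' : ∀ u v : Aᵐᵒᵖ, φ' (u * v) = φ' u * φ' v := by
        intro u v
        show MulOpposite.op (φ ((u * v).unop)) =
          MulOpposite.op (φ u.unop) * MulOpposite.op (φ v.unop)
        rw [MulOpposite.unop_mul, hmul, ← MulOpposite.op_mul]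
      have hq' : ∀ n, φ' (MulOpposite.op (q n)) = MulOpposite.op (p n) := by
        intro n; rw [hφ'op, hq]
      have hidem' : ∀ n, MulOpposite.op (p n) * MulOpposite.op (p n)
          = MulOpposite.op (p n) := by
        intro n; rw [← MulOpposite.op_mul, hidem]
      have horth' : ∀ m n, m ≠ n →
          MulOpposite.op (p m) * MulOpposite.op (p n) = 0 := by
        intro m n hmn
        rw [← MulOpposite.op_mul, horth n m hmn.symm, MulOpposite.op_zero]
      have hC' : ∀ n, ‖MulOpposite.op (p n)‖ ≤ C := by
        intro n; rw [MulOpposite.norm_op]; exact hC n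
      have hsep' : ∀ n, ∀ ε > 0, ∃ a : Aᵐᵒᵖ, ‖a‖ < ε ∧
          ‖φ' a - MulOpposite.op (x n)‖ < ε := by
        intro n ε hε
        obtain ⟨a, ha, ha'⟩ := (hmem (x n)).mp (hxS n) ε hε
        refine ⟨MulOpposite.op a, ?_, ?_⟩
        · rw [MulOpposite.norm_op]; exact ha
        · rw [hφ'op, ← MulOpposite.op_sub, MulOpposite.norm_op]; exact ha'
      have hx' : ∀ n, MulOpposite.op (p n) * MulOpposite.op (x n) ≠ 0 := by
        intro n
        rw [← MulOpposite.op_mul, Ne, MulOpposite.op_eq_zero_iff]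
        exact hxne n
      exact gliding_hump φ' hmul' (fun n => MulOpposite.op (p n))
        (fun n => MulOpposite.op (q n)) hq' hidem' horth' C hC'
        (fun n => MulOpposite.op (x n)) hsep' hx'
end
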